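/- arXiv:1410.8290 — 6 statements merged into one kernel-verified Lean document; each statement's English description precedes it below -/
import Mathlib

section
/- Let X₁ and Y be i.i.d. standard normal random variables and set X₂ = X₁/√2 + Y/√2, p₁ = Φ(X₁), p₂ = Φ(X₂). Then the conditional probability P(p₂ ≤ 1/2 ∣ p₁ ≤ 1/2) = 3/4 and P(p₂ ≤ 1/2 ∣ p₁ ≤ 1/4) = 7/8. -/
/-! The factor `1/√2` is irrelevant: since `Φ` is strictly increasing with `Φ 0 = 1/2`,
`p₂ ≤ 1/2` means `X₁ + Y ≤ 0` and `p₁ ≤ Φ q` means `X₁ ≤ q`. Reflecting `Y` turns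
`{X₁ ≤ q, X₁ + Y ≤ 0}` into `{X₁ ≤ q, X₁ ≤ Y}`, whose complement in `{X₁ ≤ q}` is
`{Y < X₁ ≤ q}`; by exchangeability this is half of the square `{X₁ ≤ q, Y ≤ q}` up to the null
diagonal. So with `F = Φ q` the joint probability is `F - F²/2` and the conditional one is
`1 - F/2`, which is `3/4` for `F = 1/2` and `7/8` for `F = 1/4`. -/

open MeasureTheory ProbabilityTheory Set

namespace ProbabilityTheory

lemma measure_prod_diagonal_eq_zero {μ ν : Measure ℝ} [SFinite ν] [NullSingletonClass ν] :
    (μ.prod ν) {p : ℝ × ℝ | p.1 = p.2} = 0 := by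
  rw [Measure.prod_apply (measurableSet_eq_fun measurable_fst measurable_snd)]
  simp [preimage, measure_singleton]

variable {ν : Measure ℝ} [IsProbabilityMeasure ν]

lemma strictMono_cdf (hν : volume ≪ ν) : StrictMono (cdf ν) := by
  intro a b hab
  have hpos : 0 < ν.real (Ioc a b) := by
    refine ENNReal.toReal_pos (fun h0 => ?_) (measure_ne_top _ _)
    exact hab.not_ge (by simpa [Real.volume_Ioc] using hν h0)
  rw [cdf_eq_real, cdf_eq_real, ← Iic_union_Ioc_eq_Iic hab.le,
    measureReal_union (Iic_disjoint_Ioc le_rfl) measurableSet_Ioc]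
  linarith

variable [NullSingletonClass ν]

lemma continuous_cdf : Continuous (cdf ν) := by
  refine continuous_iff_continuousAt.2 fun x => ?_
  rw [(monotone_cdf ν).continuousAt_iff_leftLim_eq_rightLim,
    ((cdf ν).right_continuous x).rightLim_eq]
  have hjump : ENNReal.ofReal (cdf ν x - Function.leftLim (cdf ν) x) = 0 := by
    rw [← StieltjesFunction.measure_singleton, measure_cdf, measure_singleton]
  exact le_antisymm ((monotone_cdf ν).leftLim_le le_rfl)
    (sub_nonpos.1 (ENNReal.ofReal_eq_zero.1 hjump))

lemma exists_cdf_eq {r : ℝ} (hr : r ∈ Ioo 0 1) : ∃ q, cdf ν q = r :=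
  mem_range_of_exists_le_of_exists_ge continuous_cdf
    ((tendsto_cdf_atBot ν).eventually_le_const hr.1).exists
    ((tendsto_cdf_atTop ν).eventually_const_le hr.2).exists

lemma cdf_zero_of_map_neg_eq (hsymm : ν.map (fun x => -x) = ν) : cdf ν 0 = 1 / 2 := by
  have hreflect : ν.real (Ici 0) = ν.real (Iic 0) := by
    conv_lhs => rw [← hsymm]
    rw [map_measureReal_apply measurable_neg measurableSet_Ici]
    simp
  have hsplit := measureReal_add_measureReal_compl (μ := ν) (measurableSet_Iic (a := (0 : ℝ)))
  rw [compl_Iic, measureReal_congr Ioi_ae_eq_Ici, hreflect, probReal_univ] at hsplit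
  rw [cdf_eq_real]
  linarith

lemma measureReal_prod_self_snd_lt_fst_le (q : ℝ) :
    (ν.prod ν).real {p : ℝ × ℝ | p.2 < p.1 ∧ p.1 ≤ q} = cdf ν q ^ 2 / 2 := by
  set L := {p : ℝ × ℝ | p.2 < p.1 ∧ p.1 ≤ q}
  set R := {p : ℝ × ℝ | p.1 ≤ p.2 ∧ p.2 ≤ q}
  have hLm : MeasurableSet L := by unfold L; measurability
  have hRm : MeasurableSet R := by unfold R; measurability
  have hsquare : (ν.prod ν).real L + (ν.prod ν).real R = cdf ν q ^ 2 := by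
    have : L ∪ R = Iic q ×ˢ Iic q := by
      ext p
      simp only [L, R, mem_union, mem_ofPred_eq, mem_prod, mem_Iic]
      constructor
      · rintro (⟨h₁, h₂⟩ | ⟨h₁, h₂⟩) <;> constructor <;> linarith
      · rintro ⟨h₁, h₂⟩
        exact (lt_or_ge p.2 p.1).imp (fun h => ⟨h, h₁⟩) (fun h => ⟨h, h₂⟩)
    rw [← measureReal_union (disjoint_left.2 fun p hL hR => hR.1.not_gt hL.1) hRm, this,
      measureReal_prod_prod, cdf_eq_real, sq]
  have hswap : (ν.prod ν).real R = (ν.prod ν).real L := by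
    have hdiag : R =ᵐ[ν.prod ν] Prod.swap ⁻¹' L := by
      refine (ae_eq_set.2 ⟨measure_mono_null ?_ measure_prod_diagonal_eq_zero, ?_⟩)
      · rintro p ⟨⟨h₁, h₂⟩, h⟩
        exact h₁.eq_of_not_lt fun h' => h ⟨h', h₂⟩
      · have hsub : Prod.swap ⁻¹' L ⊆ R := fun p h => ⟨h.1.le, h.2⟩
        rw [sdiff_eq_empty.2 hsub, measure_empty]
    rw [measureReal_congr hdiag,
      Measure.measurePreserving_swap.measureReal_preimage hLm.nullMeasurableSet]
  linarith

lemma measureReal_prod_self_fst_le_and_fst_le_snd (q : ℝ) :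
    (ν.prod ν).real {p : ℝ × ℝ | p.1 ≤ q ∧ p.1 ≤ p.2} = cdf ν q - cdf ν q ^ 2 / 2 := by
  have hL := measureReal_prod_self_snd_lt_fst_le (ν := ν) q
  set S := {p : ℝ × ℝ | p.1 ≤ q ∧ p.1 ≤ p.2}
  set L := {p : ℝ × ℝ | p.2 < p.1 ∧ p.1 ≤ q}
  have hstrip : S ∪ L = Iic q ×ˢ univ := by
    ext p
    simp only [S, L, mem_union, mem_ofPred_eq, mem_prod, mem_Iic, mem_univ, and_true]
    exact ⟨by rintro (h | h) <;> [exact h.1; exact h.2],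
      fun h => (le_or_gt p.1 p.2).imp (fun h' => ⟨h, h'⟩) (fun h' => ⟨h', h⟩)⟩
  have hunion := measureReal_union (μ := ν.prod ν)
    (disjoint_left.2 fun p (hS : p ∈ S) (hL : p ∈ L) => hS.2.not_gt hL.1)
    (by measurability : MeasurableSet L)
  rw [hstrip, measureReal_prod_prod, probReal_univ, mul_one, ← cdf_eq_real, hL] at hunion
  linarith

lemma measureReal_prod_self_fst_le_and_add_nonpos (hsymm : ν.map (fun x => -x) = ν) (q : ℝ) :
    (ν.prod ν).real {p : ℝ × ℝ | p.1 ≤ q ∧ p.1 + p.2 ≤ 0} = cdf ν q - cdf ν q ^ 2 / 2 := by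
  have hreflect : MeasurePreserving (Prod.map id (fun x : ℝ => -x)) (ν.prod ν) (ν.prod ν) :=
    (MeasurePreserving.id ν).prod ⟨measurable_neg, hsymm⟩
  have hpre : Prod.map id (fun x : ℝ => -x) ⁻¹' {p : ℝ × ℝ | p.1 ≤ q ∧ p.1 + p.2 ≤ 0}
      = {p : ℝ × ℝ | p.1 ≤ q ∧ p.1 ≤ p.2} := by
    ext p
    simp [← sub_eq_add_neg]
  rw [← hreflect.measureReal_preimage (by measurability), hpre,
    measureReal_prod_self_fst_le_and_fst_le_snd]

lemma cond_add_nonpos_of_le {Ω : Type*} [MeasurableSpace Ω] {μ : Measure Ω}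
    [IsProbabilityMeasure μ] {X Y : Ω → ℝ} (hX : Measurable X) (hY : Measurable Y)
    (hlawX : μ.map X = ν) (hlawY : μ.map Y = ν) (hindep : IndepFun X Y μ)
    (hsymm : ν.map (fun x => -x) = ν) {q : ℝ} (hq : 0 < cdf ν q) :
    μ[{ω | X ω + Y ω ≤ 0} | {ω | X ω ≤ q}] = ENNReal.ofReal (1 - cdf ν q / 2) := by
  have hjoint : μ.map (fun ω => (X ω, Y ω)) = ν.prod ν := by
    rw [(indepFun_iff_map_prod_eq_prod_map_map hX.aemeasurable hY.aemeasurable).1 hindep,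
      hlawX, hlawY]
  have hB : μ {ω | X ω ≤ q} = ENNReal.ofReal (cdf ν q) := by
    rw [ofReal_cdf, ← hlawX, Measure.map_apply hX measurableSet_Iic]
    rfl
  have hAB : μ ({ω | X ω ≤ q} ∩ {ω | X ω + Y ω ≤ 0})
      = ENNReal.ofReal (cdf ν q - cdf ν q ^ 2 / 2) := by
    rw [← measureReal_prod_self_fst_le_and_add_nonpos hsymm, ofReal_measureReal, ← hjoint,
      Measure.map_apply (hX.prodMk hY) (by measurability)]
    rfl
  rw [cond_apply (measurableSet_le hX measurable_const), hB, hAB, ← ENNReal.ofReal_inv_of_pos hq,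
    ← ENNReal.ofReal_mul (inv_nonneg.2 hq.le)]
  congr 1
  field_simp

end ProbabilityTheory

/-- If `X₁, Y` are i.i.d. standard normal, `X₂ = X₁/√2 + Y/√2`, `p₁ = Φ(X₁)`, `p₂ = Φ(X₂)`,
then `P(p₂ ≤ 1/2 ∣ p₁ ≤ 1/2) = 3/4` and `P(p₂ ≤ 1/2 ∣ p₁ ≤ 1/4) = 7/8`. -/
theorem cond_prob_pvalues
    {Ω : Type} [MeasurableSpace Ω] (μ : Measure Ω) [IsProbabilityMeasure μ]
    (X₁ Y : Ω → ℝ) (hX₁ : Measurable X₁) (hY : Measurable Y)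
    (hlawX : μ.map X₁ = gaussianReal 0 1) (hlawY : μ.map Y = gaussianReal 0 1)
    (hindep : IndepFun X₁ Y μ)
    (X₂ : Ω → ℝ) (hX₂ : ∀ ω, X₂ ω = X₁ ω / Real.sqrt 2 + Y ω / Real.sqrt 2)
    (p₁ p₂ : Ω → ℝ)
    (hp₁ : ∀ ω, p₁ ω = cdf (gaussianReal 0 1) (X₁ ω))
    (hp₂ : ∀ ω, p₂ ω = cdf (gaussianReal 0 1) (X₂ ω)) :
    μ[{ω | p₂ ω ≤ 1/2} | {ω | p₁ ω ≤ 1/2}] = 3/4 ∧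
    μ[{ω | p₂ ω ≤ 1/2} | {ω | p₁ ω ≤ 1/4}] = 7/8 := by
  have : NullSingletonClass (gaussianReal 0 1) :=
    ⟨fun _ => gaussianReal_absolutelyContinuous 0 one_ne_zero Real.volume_singleton⟩
  have hsymm : (gaussianReal 0 1).map (fun x => -x) = gaussianReal 0 1 := by
    simpa using gaussianReal_map_neg (μ := 0) (v := 1)
  have hmono := strictMono_cdf (gaussianReal_absolutelyContinuous' 0 one_ne_zero)
  have hmedian := cdf_zero_of_map_neg_eq hsymm
  obtain ⟨q, hq⟩ := exists_cdf_eq (ν := gaussianReal 0 1) (r := 1 / 4) ⟨by norm_num, by norm_num⟩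
  have hpre : ∀ x, {ω | p₁ ω ≤ cdf (gaussianReal 0 1) x} = {ω | X₁ ω ≤ x} := fun x => by
    simp only [hp₁, hmono.le_iff_le]
  have hA : {ω | p₂ ω ≤ 1 / 2} = {ω | X₁ ω + Y ω ≤ 0} := by
    simp only [hp₂, hX₂, ← hmedian, hmono.le_iff_le, ← add_div,
      div_le_iff₀ (Real.sqrt_pos.2 two_pos), zero_mul]
  have hcond := fun x (hx : 0 < cdf (gaussianReal 0 1) x) =>
    cond_add_nonpos_of_le hX₁ hY hlawX hlawY hindep hsymm hx
  rw [hA, ← hq, ← hmedian, hpre, hpre, hcond 0 (by simp [hmedian]), hcond q (by simp [hq]),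
    hmedian, hq]
  norm_num [ENNReal.ofReal_div_of_pos]
end

section
/- Consider a step-up test with deterministic critical values 0 < α_{1:n} ≤ … ≤ α_{n:n} < 1 on p-values p₁,…,pₙ where the p-values of true null hypotheses are i.i.d. uniform on (0,1) and independent of the false p-values (BI model) with N = n₀ true hypotheses fixed. If α_{j:n} ≥ jc/n for all j ≤ n and some c > 0, then FDR = E(V/R) ≥ c·n₀/n (with V/R := 0 when R = 0). -/
/-!
Write `V / R = ∑_{i ∈ T} 𝟙{p_i ≤ α_R} / R`. Let `R_i` be the number of rejections after `p_i` is
replaced by `0`; it is a function of the other p-values only. On `{p_i ≤ α_{R_i}}` the step-up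
test rejects `i` and `R = R_i`, while off this event `i` is not rejected. Hence
`E[𝟙{p_i ≤ α_R} / R] = E[𝟙{p_i ≤ α_{R_i}} / R_i] = E[α_{R_i} / R_i] ≥ c / n`, the middle step
because `p_i ~ U(0,1)` is independent of `R_i`: `p_i` is independent of the other true p-values,
and the true p-values jointly of the false ones. Summing over the `n₀` true hypotheses gives the
bound.
-/
open MeasureTheory ProbabilityTheory Finset
open scoped Classical

/-- Number of rejections `R` of the step-up test with critical values `αc 1 ≤ … ≤ αc n`:
`R = max{i ∈ {1,…,n} : p_{i:n} ≤ αc i} = max{i : #{j : p_j ≤ αc i} ≥ i}` (`0` if empty). -/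
noncomputable def numRej {Ω ι : Type*} [Fintype ι] (n : ℕ) (αc : ℕ → ℝ)
    (q : ι → Ω → ℝ) (ω : Ω) : ℕ :=
  ((Finset.Icc 1 n).filter fun i =>
    i ≤ (Finset.univ.filter fun j => q j ω ≤ αc i).card).sup id

/-- Number `V` of falsely rejected true hypotheses: true `p`-values `≤ αc (max R 1)`
(with the convention `α_{0:n} = α_{1:n}`). -/
noncomputable def numFalseRej {Ω ι : Type*} [Fintype ι] (n : ℕ) (αc : ℕ → ℝ)
    (q : ι → Ω → ℝ) (T : Finset ι) (ω : Ω) : ℕ :=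
  (T.filter fun j => q j ω ≤ αc (max (numRej n αc q ω) 1)).card

section StepUp

variable {Ω ι : Type*} [Fintype ι] {n : ℕ} {αc : ℕ → ℝ} {q : ι → Ω → ℝ} {ω : Ω}

lemma numRej_le : numRej n αc q ω ≤ n :=
  Finset.sup_le fun _ hi => (mem_Icc.mp (mem_filter.mp hi).1).2

lemma le_numRej {j : ℕ} (hj1 : 1 ≤ j) (hjn : j ≤ n) (hj : j ≤ #{k | q k ω ≤ αc j}) :
    j ≤ numRej n αc q ω :=
  le_sup (f := id) (mem_filter.mpr ⟨mem_Icc.mpr ⟨hj1, hjn⟩, hj⟩)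

lemma numRej_mem (h : numRej n αc q ω ≠ 0) :
    numRej n αc q ω ∈ (Icc 1 n).filter fun i => i ≤ #{k | q k ω ≤ αc i} := by
  have hne : ((Icc 1 n).filter fun i => i ≤ #{k | q k ω ≤ αc i}).Nonempty :=
    nonempty_iff_ne_empty.mpr fun h' => h (by rw [numRej, h', sup_empty]; rfl)
  obtain ⟨r, hr, hR⟩ := exists_mem_eq_sup _ hne id
  rwa [numRej, hR]

variable [DecidableEq ι] {i : ι} {t : ℝ}

lemma card_le_card_update_zero (ht : 0 ≤ t) :
    #{k | q k ω ≤ t} ≤ #{k | Function.update q i 0 k ω ≤ t} :=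
  card_le_card fun k => by
    rcases eq_or_ne k i with rfl | hk <;> simp_all

lemma card_update_zero_eq (ht : 0 ≤ t) (hqi : q i ω ≤ t) :
    #{k | Function.update q i 0 k ω ≤ t} = #{k | q k ω ≤ t} := by
  congr 1
  refine filter_congr fun k _ => ?_
  rcases eq_or_ne k i with rfl | hk <;> simp_all

variable (hα : ∀ j, 1 ≤ j → j ≤ n → 0 ≤ αc j)
include hα

lemma numRej_le_numRej_update_zero :
    numRej n αc q ω ≤ numRej n αc (Function.update q i 0) ω := by
  refine sup_mono fun j hj => ?_
  obtain ⟨hj', hjc⟩ := mem_filter.mp hj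
  obtain ⟨hj1, hjn⟩ := mem_Icc.mp hj'
  exact mem_filter.mpr ⟨hj', hjc.trans (card_le_card_update_zero (hα j hj1 hjn))⟩

lemma numRej_eq_numRej_update_zero (hR : numRej n αc (Function.update q i 0) ω ≠ 0)
    (hqi : q i ω ≤ αc (numRej n αc (Function.update q i 0) ω)) :
    numRej n αc q ω = numRej n αc (Function.update q i 0) ω := by
  refine (numRej_le_numRej_update_zero hα).antisymm ?_
  obtain ⟨hR', hcard⟩ := mem_filter.mp (numRej_mem hR)
  obtain ⟨hR1, hRn⟩ := mem_Icc.mp hR'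
  rw [card_update_zero_eq (hα _ hR1 hRn) hqi] at hcard
  exact le_numRej hR1 hRn hcard

lemma numRej_update_zero_eq (hmono : ∀ a b, 1 ≤ a → a ≤ b → b ≤ n → αc a ≤ αc b)
    (hR : 1 ≤ numRej n αc q ω) (hqi : q i ω ≤ αc (numRej n αc q ω)) :
    numRej n αc (Function.update q i 0) ω = numRej n αc q ω := by
  refine le_antisymm (Finset.sup_le fun j hj => ?_) (numRej_le_numRej_update_zero hα)
  obtain ⟨hj', hjc⟩ := mem_filter.mp hj
  obtain ⟨hj1, hjn⟩ := mem_Icc.mp hj'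
  by_contra! hlt
  have hqij : q i ω ≤ αc j := hqi.trans (hmono _ _ hR hlt.le hjn)
  rw [card_update_zero_eq (hα j hj1 hjn) hqij] at hjc
  exact hlt.not_ge (le_numRej hj1 hjn hjc)

lemma one_le_numRej_update_zero (hn : 1 ≤ n) :
    1 ≤ numRej n αc (Function.update q i 0) ω :=
  le_numRej le_rfl hn <| card_pos.mpr ⟨i, by simpa using hα 1 le_rfl hn⟩

lemma ite_div_numRej_eq (hn : 1 ≤ n) (hmono : ∀ a b, 1 ≤ a → a ≤ b → b ≤ n → αc a ≤ αc b) :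
    (if q i ω ≤ αc (max (numRej n αc q ω) 1) then (1 : ℝ) else 0) / numRej n αc q ω =
      if q i ω ≤ αc (numRej n αc (Function.update q i 0) ω) then
        ((numRej n αc (Function.update q i 0) ω : ℕ) : ℝ)⁻¹ else 0 := by
  have hR' := one_le_numRej_update_zero (i := i) (q := q) (ω := ω) hα hn
  by_cases hqi : q i ω ≤ αc (numRej n αc (Function.update q i 0) ω)
  · have hR := numRej_eq_numRej_update_zero hα (Nat.one_le_iff_ne_zero.mp hR') hqi
    rw [← hR] at hqi hR' ⊢
    rw [max_eq_left hR']
    simp [hqi]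
  · rw [if_neg hqi]
    rcases Nat.eq_zero_or_pos (numRej n αc q ω) with h0 | hR
    · simp [h0]
    · have hqi' : ¬ q i ω ≤ αc (numRej n αc q ω) := fun h => by
        rw [numRej_update_zero_eq hα hmono hR h] at hqi
        exact hqi h
      rw [max_eq_left hR, if_neg hqi', zero_div]

lemma numFalseRej_div_numRej_eq_sum (hn : 1 ≤ n)
    (hmono : ∀ a b, 1 ≤ a → a ≤ b → b ≤ n → αc a ≤ αc b) (T : Finset ι) :
    (numFalseRej n αc q T ω : ℝ) / numRej n αc q ω =
      ∑ i ∈ T, if q i ω ≤ αc (numRej n αc (Function.update q i 0) ω) then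
        ((numRej n αc (Function.update q i 0) ω : ℕ) : ℝ)⁻¹ else 0 := by
  rw [numFalseRej, card_filter, Nat.cast_sum, sum_div]
  refine sum_congr rfl fun i _ => ?_
  rw [← ite_div_numRej_eq hα hn hmono]
  split_ifs <;> simp

end StepUp

theorem Finset.measurable_sup {α δ ι : Type*} [MeasurableSpace α] [MeasurableSpace δ]
    [SemilatticeSup α] [OrderBot α] [MeasurableSup₂ α] {s : Finset ι} {f : ι → δ → α}
    (hf : ∀ i ∈ s, Measurable (f i)) : Measurable (s.sup f) :=
  Finset.sup_induction measurable_const (fun _ hf _ hg => hf.sup hg) hf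

section Measurability

variable {Ω ι : Type*} {mΩ : MeasurableSpace Ω} [Fintype ι] {q : ι → Ω → ℝ}

lemma measurable_card_filter_le (hq : ∀ j, Measurable (q j)) (t : ℝ) :
    Measurable fun ω => #{j | q j ω ≤ t} := by
  simp_rw [card_filter]
  exact Finset.measurable_sum _ fun j _ =>
    Measurable.ite (measurableSet_le (hq j) measurable_const) measurable_const measurable_const

lemma measurable_numRej (hq : ∀ j, Measurable (q j)) (n : ℕ) (αc : ℕ → ℝ) :
    Measurable (numRej n αc q) := by
  have h : numRej n αc q =
      (Icc 1 n).sup fun r ω => if r ≤ #{j | q j ω ≤ αc r} then r else 0 := by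
    ext ω
    simp only [numRej, Finset.sup_apply, sup_ite, Finset.sup_le_iff, mem_filter, zero_le,
      implies_true, sup_of_le_left]
    rfl
  rw [h]
  exact Finset.measurable_sup fun r _ =>
    (measurable_of_countable fun k : ℕ => if r ≤ k then r else 0).comp
      (measurable_card_filter_le hq (αc r))

end Measurability

section Independence

open MeasurableSpace

variable {Ω : Type*} {mΩ : MeasurableSpace Ω}

lemma isPiSystem_image2_inter (m₁ m₂ : MeasurableSpace Ω) :
    IsPiSystem (Set.image2 (· ∩ ·) {s | MeasurableSet[m₁] s} {s | MeasurableSet[m₂] s}) := by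
  rintro _ ⟨B₁, hB₁, C₁, hC₁, rfl⟩ _ ⟨B₂, hB₂, C₂, hC₂, rfl⟩ _
  exact ⟨B₁ ∩ B₂, hB₁.inter hB₂, C₁ ∩ C₂, hC₁.inter hC₂, Set.inter_inter_inter_comm _ _ _ _⟩

lemma generateFrom_image2_inter (m₁ m₂ : MeasurableSpace Ω) :
    generateFrom (Set.image2 (· ∩ ·) {s | MeasurableSet[m₁] s} {s | MeasurableSet[m₂] s}) =
      m₁ ⊔ m₂ := by
  refine le_antisymm (generateFrom_le ?_) (sup_le (fun s hs => ?_) fun s hs => ?_)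
  · rintro _ ⟨B, hB, C, hC, rfl⟩
    exact (le_sup_left (b := m₂) B hB).inter (le_sup_right (a := m₁) C hC)
  · exact measurableSet_generateFrom ⟨s, hs, Set.univ, MeasurableSet.univ, Set.inter_univ s⟩
  · exact measurableSet_generateFrom ⟨Set.univ, MeasurableSet.univ, s, hs, Set.univ_inter s⟩

lemma indep_sup_of_indep_of_indep_sup {μ : Measure Ω} [IsProbabilityMeasure μ]
    {m₁ m₂ m₃ : MeasurableSpace Ω} (h₁ : m₁ ≤ mΩ) (h₂ : m₂ ≤ mΩ) (h₃ : m₃ ≤ mΩ)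
    (h₁₂ : Indep m₁ m₂ μ) (h₁₂₃ : Indep (m₁ ⊔ m₂) m₃ μ) :
    Indep m₁ (m₂ ⊔ m₃) μ := by
  rw [Indep_iff] at h₁₂ h₁₂₃
  refine IndepSets.indep h₁ (sup_le h₂ h₃) (@isPiSystem_measurableSet Ω m₁)
    (isPiSystem_image2_inter m₂ m₃) (@generateFrom_measurableSet Ω m₁).symm
    (generateFrom_image2_inter m₂ m₃).symm ?_
  rw [IndepSets_iff]
  rintro A _ hA ⟨B, hB, C, hC, rfl⟩
  have hB' : MeasurableSet[m₁ ⊔ m₂] B := le_sup_right (a := m₁) B hB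
  have hAB : MeasurableSet[m₁ ⊔ m₂] (A ∩ B) := (le_sup_left (b := m₂) A hA).inter hB'
  calc μ (A ∩ (B ∩ C)) = μ (A ∩ B) * μ C := by rw [← Set.inter_assoc, h₁₂₃ _ _ hAB hC]
    _ = μ A * μ (B ∩ C) := by rw [h₁₂ _ _ hA hB, h₁₂₃ _ _ hB' hC, mul_assoc]

end Independence

section BI

variable {Ω ι β : Type*} {mΩ : MeasurableSpace Ω} [mβ : MeasurableSpace β] {μ : Measure Ω}
  [IsProbabilityMeasure μ]

lemma comap_pi_eq_iSup_comap {κ : Type*} (f : κ → Ω → β) :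
    MeasurableSpace.pi.comap (fun ω k => f k ω) = ⨆ k, mβ.comap (f k) := by
  simp_rw [MeasurableSpace.pi, MeasurableSpace.comap_iSup, MeasurableSpace.comap_comp]
  rfl

lemma indep_comap_iSup_ne {q : ι → Ω → β} (hq : ∀ j, Measurable (q j)) {T : Finset ι}
    (hiid : iIndepFun (fun i : {j // j ∈ T} => q i) μ)
    (hindep : IndepFun (fun ω (i : {j // j ∈ T}) => q i ω)
      (fun ω (j : {j // j ∉ T}) => q j ω) μ)
    {i : ι} (hi : i ∈ T) :
    Indep (mβ.comap (q i)) (⨆ (j) (_ : j ≠ i), mβ.comap (q j)) μ := by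
  set x : {j // j ∈ T} := ⟨i, hi⟩
  set mB := ⨆ k ∈ ({x}ᶜ : Set {j // j ∈ T}), mβ.comap (q k)
  set mC := ⨆ k : {j // j ∉ T}, mβ.comap (q k)
  have h_true : Indep (mβ.comap (q i)) mB μ := by
    have h := indep_iSup_of_disjoint (fun k : {j // j ∈ T} => (hq k).comap_le) hiid.iIndep
      (disjoint_compl_right (a := ({x} : Set {j // j ∈ T})))
    rwa [show (⨆ k ∈ ({x} : Set {j // j ∈ T}), mβ.comap (q k)) = mβ.comap (q i) by simp [x]] at h
  have h_false : Indep (mβ.comap (q i) ⊔ mB) mC μ := by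
    have h := (IndepFun_iff_Indep _ _ μ).mp hindep
    rw [comap_pi_eq_iSup_comap, comap_pi_eq_iSup_comap] at h
    exact indep_of_indep_of_le_left h <| sup_le (le_iSup (fun k : {j // j ∈ T} => mβ.comap (q k)) x)
      (iSup₂_le fun k _ => le_iSup (fun k : {j // j ∈ T} => mβ.comap (q k)) k)
  have hle : (⨆ (j) (_ : j ≠ i), mβ.comap (q j)) ≤ mB ⊔ mC := iSup₂_le fun j hj => by
    by_cases hjT : j ∈ T
    · refine le_sup_of_le_left (le_iSup₂_of_le (f := fun (k : {j // j ∈ T}) _ => mβ.comap (q k))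
        ⟨j, hjT⟩ ?_ le_rfl)
      simpa [x, Subtype.ext_iff] using hj
    · exact le_sup_of_le_right (le_iSup (fun k : {j // j ∉ T} => mβ.comap (q k)) ⟨j, hjT⟩)
  have hB : mB ≤ mΩ := iSup₂_le fun k _ => (hq k).comap_le
  have hC : mC ≤ mΩ := iSup_le fun k => (hq k).comap_le
  exact indep_of_indep_of_le_right
    (indep_sup_of_indep_of_indep_sup (hq i).comap_le hB hC h_true h_false) hle

lemma indepFun_numRej_update_zero [Fintype ι] [DecidableEq ι] {q : ι → Ω → ℝ}
    (hq : ∀ j, Measurable (q j)) {T : Finset ι}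
    (hiid : iIndepFun (fun i : {j // j ∈ T} => q i) μ)
    (hindep : IndepFun (fun ω (i : {j // j ∈ T}) => q i ω)
      (fun ω (j : {j // j ∉ T}) => q j ω) μ)
    {i : ι} (hi : i ∈ T) (n : ℕ) (αc : ℕ → ℝ) :
    IndepFun (q i) (numRej n αc (Function.update q i 0)) μ := by
  rw [IndepFun_iff_Indep]
  refine indep_of_indep_of_le_right (indep_comap_iSup_ne hq hiid hindep hi) (Measurable.comap_le ?_)
  refine measurable_numRej (mΩ := ⨆ (j) (_ : j ≠ i), Real.measurableSpace.comap (q j))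
    (fun j => ?_) n αc
  rcases eq_or_ne j i with rfl | hj
  · rw [Function.update_self]; exact measurable_const
  · rw [Function.update_of_ne hj, measurable_iff_comap_le]
    exact le_iSup₂ (f := fun j (_ : j ≠ i) => Real.measurableSpace.comap (q j)) j hj

end BI

section Freezing

variable {Ω β κ : Type*} {mΩ : MeasurableSpace Ω} {μ : Measure Ω}

lemma measureReal_preimage_Iic_of_map_eq_uniform {X : Ω → ℝ} (hX : Measurable X)
    (hunif : μ.map X = volume.restrict (Set.Ioo 0 1)) {t : ℝ} (ht0 : 0 ≤ t) (ht1 : t ≤ 1) :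
    μ.real (X ⁻¹' Set.Iic t) = t := by
  have hIic : Set.Iic t ∩ Set.Ioc 0 1 = Set.Ioc 0 t := by
    ext x
    simp only [Set.mem_inter_iff, Set.mem_Iic, Set.mem_Ioc]
    exact ⟨fun ⟨hxt, hx0, _⟩ => ⟨hx0, hxt⟩, fun ⟨hx0, hxt⟩ => ⟨hxt, hx0, hxt.trans ht1⟩⟩
  rw [measureReal_def, ← Measure.map_apply hX measurableSet_Iic, hunif,
    Measure.restrict_congr_set Ioo_ae_eq_Ioc, Measure.restrict_apply measurableSet_Iic, hIic,
    Real.volume_Ioc, sub_zero, ENNReal.toReal_ofReal ht0]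

variable {X : Ω → β} {N : Ω → κ} {s : Finset κ} {A : κ → Set β} [∀ r, DecidablePred (· ∈ A r)]

lemma ite_mem_eq_sum_indicator (hNs : ∀ ω, N ω ∈ s) (f : κ → ℝ) (ω : Ω) :
    (if X ω ∈ A (N ω) then f (N ω) else 0) =
      ∑ r ∈ s, (N ⁻¹' {r} ∩ X ⁻¹' A r).indicator (fun _ => f r) ω := by
  simp only [Set.indicator_apply, Set.mem_inter_iff, Set.mem_preimage, Set.mem_singleton_iff,
    ite_and]
  rw [sum_ite_eq, if_pos (hNs ω)]

variable [MeasurableSpace β] [MeasurableSpace κ] [MeasurableSingletonClass κ] [IsFiniteMeasure μ]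

lemma integrable_ite_mem (hX : Measurable X) (hN : Measurable N)
    (hNs : ∀ ω, N ω ∈ s) (hA : ∀ r, MeasurableSet (A r)) (f : κ → ℝ) :
    Integrable (fun ω => if X ω ∈ A (N ω) then f (N ω) else 0) μ := by
  simp_rw [ite_mem_eq_sum_indicator hNs]
  exact integrable_finsetSum _ fun r _ =>
    (integrable_const _).indicator ((hN (measurableSet_singleton r)).inter (hX (hA r)))

theorem integral_ite_mem_of_indepFun (hX : Measurable X) (hN : Measurable N)
    (hXN : IndepFun X N μ) (hNs : ∀ ω, N ω ∈ s) (hA : ∀ r, MeasurableSet (A r)) (f : κ → ℝ) :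
    ∫ ω, (if X ω ∈ A (N ω) then f (N ω) else 0) ∂μ =
      ∑ r ∈ s, μ.real (X ⁻¹' A r) * μ.real (N ⁻¹' {r}) * f r := by
  have hmeas r : MeasurableSet (N ⁻¹' {r} ∩ X ⁻¹' A r) :=
    (hN (measurableSet_singleton r)).inter (hX (hA r))
  simp_rw [ite_mem_eq_sum_indicator hNs]
  rw [integral_finsetSum _ fun r _ => (integrable_const _).indicator (hmeas r)]
  refine sum_congr rfl fun r _ => ?_
  rw [integral_indicator_const _ (hmeas r), smul_eq_mul, measureReal_def, measureReal_def,
    measureReal_def, Set.inter_comm,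
    hXN.measure_inter_preimage_eq_mul _ _ (hA r) (measurableSet_singleton r), ENNReal.toReal_mul]

lemma le_integral_ite_mem_of_indepFun [IsProbabilityMeasure μ] (hX : Measurable X)
    (hN : Measurable N) (hXN : IndepFun X N μ) (hNs : ∀ ω, N ω ∈ s)
    (hA : ∀ r, MeasurableSet (A r)) {f : κ → ℝ} {c : ℝ}
    (hc : ∀ r ∈ s, c ≤ μ.real (X ⁻¹' A r) * f r) :
    c ≤ ∫ ω, (if X ω ∈ A (N ω) then f (N ω) else 0) ∂μ := by
  have hmass : ∑ r ∈ s, μ.real (N ⁻¹' {r}) = 1 := by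
    rw [sum_measureReal_preimage_singleton s fun r _ => hN (measurableSet_singleton r),
      Set.preimage_eq_univ_iff.mpr fun _ ⟨ω, hω⟩ => hω ▸ hNs ω, probReal_univ]
  rw [integral_ite_mem_of_indepFun hX hN hXN hNs hA f]
  calc c = ∑ r ∈ s, c * μ.real (N ⁻¹' {r}) := by rw [← mul_sum, hmass, mul_one]
    _ ≤ ∑ r ∈ s, μ.real (X ⁻¹' A r) * μ.real (N ⁻¹' {r}) * f r := sum_le_sum fun r hr => by
      rw [mul_right_comm]
      exact mul_le_mul_of_nonneg_right (hc r hr) measureReal_nonneg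

end Freezing

theorem fdr_lower_bound_general
    {Ω : Type} [MeasurableSpace Ω] (μ : Measure Ω) [IsProbabilityMeasure μ]
    (n n₀ : ℕ) (hn : 0 < n)
    (q : Fin n → Ω → ℝ) (hq : ∀ j, Measurable (q j))
    (T : Finset (Fin n)) (hT : T.card = n₀)
    (αc : ℕ → ℝ) (hpos : 0 < αc 1) (hlt : αc n < 1)
    (hmono : ∀ i j, 1 ≤ i → i ≤ j → j ≤ n → αc i ≤ αc j)
    (hunif : ∀ i ∈ T, μ.map (q i) = volume.restrict (Set.Ioo 0 1))
    (hiid : iIndepFun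
      (fun i : {j : Fin n // j ∈ T} => q i) μ)
    (hindep : IndepFun (fun ω (i : {j : Fin n // j ∈ T}) => q i ω)
      (fun ω (j : {j : Fin n // j ∉ T}) => q j ω) μ)
    (c : ℝ)
    (hαc : ∀ j, 1 ≤ j → j ≤ n → (j : ℝ) * c / n ≤ αc j) :
    c * n₀ / n ≤ ∫ ω, (numFalseRej n αc q T ω : ℝ) / (numRej n αc q ω : ℝ) ∂μ := by
  have hα j (hj1 : 1 ≤ j) (hjn : j ≤ n) : 0 ≤ αc j := hpos.le.trans (hmono 1 j le_rfl hj1 hjn)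
  set R : Fin n → Ω → ℕ := fun i => numRej n αc (Function.update q i 0)
  have hR i ω : R i ω ∈ Icc 1 n := mem_Icc.mpr ⟨one_le_numRej_update_zero hα hn, numRej_le⟩
  have hRmeas i : Measurable (R i) :=
    measurable_numRej (fun j => by rcases eq_or_ne j i with rfl | hj <;> simp [*, measurable_zero])
      n αc
  have hterm i (hi : i ∈ T) :
      c / n ≤ ∫ ω, (if q i ω ≤ αc (R i ω) then ((R i ω : ℕ) : ℝ)⁻¹ else 0) ∂μ := by
    refine le_integral_ite_mem_of_indepFun (A := fun r => Set.Iic (αc r))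
      (f := fun r : ℕ => (r : ℝ)⁻¹) (hq i) (hRmeas i)
      (indepFun_numRej_update_zero hq hiid hindep hi n αc) (hR i) (fun _ => measurableSet_Iic)
      fun r hr => ?_
    obtain ⟨hr1, hrn⟩ := mem_Icc.mp hr
    rw [measureReal_preimage_Iic_of_map_eq_uniform (hq i) (hunif i hi) (hα r hr1 hrn)
      ((hmono r n hr1 hrn le_rfl).trans hlt.le), le_mul_inv_iff₀ (by positivity)]
    exact (show c / n * r = r * c / n by ring) ▸ hαc r hr1 hrn
  calc c * n₀ / n = ∑ _i ∈ T, c / n := by rw [sum_const, hT, nsmul_eq_mul]; ring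
    _ ≤ ∑ i ∈ T, ∫ ω, (if q i ω ≤ αc (R i ω) then ((R i ω : ℕ) : ℝ)⁻¹ else 0) ∂μ :=
      sum_le_sum hterm
    _ = ∫ ω, ∑ i ∈ T, (if q i ω ≤ αc (R i ω) then ((R i ω : ℕ) : ℝ)⁻¹ else 0) ∂μ :=
      (integral_finsetSum T fun i _ => integrable_ite_mem (A := fun r => Set.Iic (αc r)) (hq i)
        (hRmeas i) (hR i) (fun _ => measurableSet_Iic) fun r : ℕ => (r : ℝ)⁻¹).symm
    _ = _ := integral_congr_ae <| ae_of_all _ fun ω =>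
      (numFalseRej_div_numRej_eq_sum hα hn hmono T).symm

/-- Lower FDR bound in the BI model: if `α_{j:n} ≥ jc/n` for all `j ≤ n` with `c > 0`,
then the step-up test has `FDR = E(V/R) ≥ c·n₀/n`. -/
theorem fdr_lower_bound
    {Ω : Type} [MeasurableSpace Ω] (μ : Measure Ω) [IsProbabilityMeasure μ]
    (n n₀ : ℕ) (hn : 0 < n) (hn₀ : n₀ ≤ n)
    (q : Fin n → Ω → ℝ) (hq : ∀ j, Measurable (q j))
    (T : Finset (Fin n)) (hT : T.card = n₀)
    (αc : ℕ → ℝ) (hpos : 0 < αc 1) (hlt : αc n < 1)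
    (hmono : ∀ i j, 1 ≤ i → i ≤ j → j ≤ n → αc i ≤ αc j)
    (hunif : ∀ i ∈ T, μ.map (q i) = volume.restrict (Set.Ioo 0 1))
    (hiid : iIndepFun
      (fun i : {j : Fin n // j ∈ T} => q i) μ)
    (hindep : IndepFun (fun ω (i : {j : Fin n // j ∈ T}) => q i ω)
      (fun ω (j : {j : Fin n // j ∉ T}) => q j ω) μ)
    (c : ℝ) (hc : 0 < c)
    (hαc : ∀ j, 1 ≤ j → j ≤ n → (j : ℝ) * c / n ≤ αc j) :
    c * n₀ / n ≤ ∫ ω, (numFalseRej n αc q T ω : ℝ) / (numRej n αc q ω : ℝ) ∂μ :=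
  fdr_lower_bound_general μ n n₀ hn q hq T hT αc hpos hlt hmono hunif hiid hindep c hαc
end

section
/- Let the true p-values be i.i.d. uniform on (0,1), independent of the false p-values (BI model with N = n₀ true hypotheses), and consider the step-up test with deterministic critical values 0 < α_{1:n} ≤ … ≤ α_{n:n} < 1. If α_{j:n} ≤ jc/n for all j ≤ k and some 0 < c < 1, then FDR ≤ c·n₀/n + P(R > k). -/
open MeasureTheory ProbabilityTheory Finset
open scoped Classical

/-!
On `{R ≤ k}` write `V / R = ∑_{i ∈ T} 1{q i ≤ α_R} / R`. Let `Rᵢ` be the number of rejections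
after `q i` is replaced by `α₁`. It is a function of the other p-values, hence independent of
`q i`, and `Rᵢ = R` as soon as hypothesis `i` is rejected, so the `i`-th summand equals
`1{q i ≤ α_{Rᵢ}, Rᵢ ≤ k} / Rᵢ`. Its expectation is `∑_{r ≤ k} P(Rᵢ = r) P(q i ≤ α_r) / r`, which is
at most `c / n` because `α_r ≤ r c / n`. On `{R > k}` the ratio `V / R` is at most `1`.
-/

lemma MeasurableSpace.comap_pi_eq_iSup {Ω ι β : Type*} [mβ : MeasurableSpace β]
    (f : ι → Ω → β) : MeasurableSpace.pi.comap (fun ω j => f j ω) = ⨆ j, mβ.comap (f j) := by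
  simp only [MeasurableSpace.pi, MeasurableSpace.comap_iSup, MeasurableSpace.comap_comp]
  rfl

namespace ProbabilityTheory

open MeasurableSpace

variable {Ω : Type*} {mΩ : MeasurableSpace Ω} {μ : Measure Ω}

theorem indep_sup_right_of_indep_sup_left [IsProbabilityMeasure μ]
    {m₁ m₂ m₃ : MeasurableSpace Ω} (h₁ : m₁ ≤ mΩ) (h₂ : m₂ ≤ mΩ) (h₃ : m₃ ≤ mΩ)
    (h₁₂ : Indep m₁ m₂ μ) (h₁₂₃ : Indep (m₁ ⊔ m₂) m₃ μ) : Indep m₁ (m₂ ⊔ m₃) μ := by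
  let p : Set (Set Ω) := {s | ∃ t u, MeasurableSet[m₂] t ∧ MeasurableSet[m₃] u ∧ s = t ∩ u}
  have hp : IsPiSystem p := by
    rintro _ ⟨t, u, ht, hu, rfl⟩ _ ⟨t', u', ht', hu', rfl⟩ _
    exact ⟨t ∩ t', u ∩ u', ht.inter ht', hu.inter hu', by rw [Set.inter_inter_inter_comm]⟩
  have hgen : m₂ ⊔ m₃ = generateFrom p := by
    refine le_antisymm (sup_le (fun t ht => ?_) (fun u hu => ?_)) (generateFrom_le ?_)
    · exact measurableSet_generateFrom ⟨t, Set.univ, ht, .univ, (Set.inter_univ t).symm⟩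
    · exact measurableSet_generateFrom ⟨Set.univ, u, .univ, hu, (Set.univ_inter u).symm⟩
    · rintro _ ⟨t, u, ht, hu, rfl⟩
      exact (le_sup_left (b := m₃) t ht).inter (le_sup_right (a := m₂) u hu)
  refine IndepSets.indep h₁ (sup_le h₂ h₃) (@isPiSystem_measurableSet Ω m₁) hp
    (@generateFrom_measurableSet Ω m₁).symm hgen ?_
  rw [IndepSets_iff]
  rintro s _ hs ⟨t, u, ht, hu, rfl⟩
  rw [Indep_iff] at h₁₂ h₁₂₃
  have ht' : MeasurableSet[m₁ ⊔ m₂] t := le_sup_right (a := m₁) t ht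
  calc μ (s ∩ (t ∩ u)) = μ (s ∩ t) * μ u := by
        rw [← Set.inter_assoc, h₁₂₃ _ _ ((le_sup_left (b := m₂) s hs).inter ht') hu]
    _ = μ s * μ (t ∩ u) := by rw [h₁₂ _ _ hs ht, h₁₂₃ _ _ ht' hu, mul_assoc]

theorem indep_comap_iSup_comap_ne {ι β : Type*} [mβ : MeasurableSpace β]
    [IsProbabilityMeasure μ] {f : ι → Ω → β} (hf : ∀ j, Measurable (f j)) {T : Finset ι}
    (hiid : iIndepFun (fun i : {j // j ∈ T} => f i) μ)
    (hindep : IndepFun (fun ω (i : {j // j ∈ T}) => f i ω) (fun ω (j : {j // j ∉ T}) => f j ω) μ)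
    {i : ι} (hi : i ∈ T) :
    Indep (mβ.comap (f i)) (⨆ (j) (_ : j ≠ i), mβ.comap (f j)) μ := by
  let i' : {j // j ∈ T} := ⟨i, hi⟩
  let mT : MeasurableSpace Ω := ⨆ (j : {j // j ∈ T}) (_ : j ≠ i'), mβ.comap (f j)
  let mTc : MeasurableSpace Ω := ⨆ j : {j // j ∉ T}, mβ.comap (f j)
  have hle (j : ι) : mβ.comap (f j) ≤ mΩ := (hf j).comap_le
  have hmT : mT ≤ mΩ := iSup₂_le fun j _ => hle j
  have hmTc : mTc ≤ mΩ := iSup_le fun j => hle j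
  have h₁₂ : Indep (mβ.comap (f i)) mT μ := by
    simpa using indep_iSup_of_disjoint (fun j : {j // j ∈ T} => hle j) hiid.iIndep
      (disjoint_compl_right (a := ({i'} : Set {j // j ∈ T})))
  have h₁₂₃ : Indep (mβ.comap (f i) ⊔ mT) mTc μ := by
    rw [IndepFun_iff_Indep, comap_pi_eq_iSup, comap_pi_eq_iSup] at hindep
    exact indep_of_indep_of_le_left hindep <|
      sup_le (le_iSup (fun j : {j // j ∈ T} => mβ.comap (f j)) i')
        (iSup₂_le fun j _ => le_iSup_of_le j le_rfl)
  have hsplit : (⨆ (j) (_ : j ≠ i), mβ.comap (f j)) ≤ mT ⊔ mTc := by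
    refine iSup₂_le fun j hj => ?_
    by_cases hjT : j ∈ T
    · exact le_sup_of_le_left <| le_iSup₂_of_le (f := fun (j : {j // j ∈ T}) (_ : j ≠ i') =>
        mβ.comap (f j)) ⟨j, hjT⟩ (fun h => hj (congrArg Subtype.val h)) le_rfl
    · exact le_sup_of_le_right <| le_iSup_of_le (f := fun j : {j // j ∉ T} => mβ.comap (f j))
        ⟨j, hjT⟩ le_rfl
  exact indep_of_indep_of_le_right
    (indep_sup_right_of_indep_sup_left (hle i) hmT hmTc h₁₂ h₁₂₃) hsplit

lemma measureReal_preimage_Iic_le {X : Ω → ℝ} (hX : Measurable X)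
    (hunif : μ.map X = volume.restrict (Set.Ioo 0 1)) {a : ℝ} (ha : 0 ≤ a) :
    μ.real (X ⁻¹' Set.Iic a) ≤ a := by
  rw [measureReal_def, ← Measure.map_apply hX measurableSet_Iic, hunif,
    Measure.restrict_apply measurableSet_Iic]
  refine ENNReal.toReal_le_of_le_ofReal ha ?_
  calc volume (Set.Iic a ∩ Set.Ioo 0 1) ≤ volume (Set.Ioc 0 a) :=
        measure_mono fun x hx => ⟨hx.2.1, hx.1⟩
    _ = ENNReal.ofReal a := by simp [Real.volume_Ioc]

variable {X : Ω → ℝ} {N : Ω → ℕ} {α : ℕ → ℝ} {k : ℕ}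

-- The term `r = 0` vanishes because `(0 : ℝ)⁻¹ = 0`.
lemma ite_inv_eq_sum_indicator (ω : Ω) :
    (if X ω ≤ α (N ω) ∧ N ω ≤ k then (N ω : ℝ)⁻¹ else 0) =
      ∑ r ∈ range (k + 1),
        (X ⁻¹' Set.Iic (α r) ∩ N ⁻¹' {r}).indicator (fun _ => (r : ℝ)⁻¹) ω := by
  by_cases hN : N ω ≤ k
  · rw [sum_eq_single_of_mem (N ω) (mem_range.2 (Nat.lt_succ_of_le hN)) fun r _ hr => ?_]
    · by_cases hX : X ω ≤ α (N ω) <;> simp [hX, hN]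
    · simp [Ne.symm hr]
  · rw [if_neg fun h => hN h.2, eq_comm]
    refine sum_eq_zero fun r hr => Set.indicator_of_notMem (fun h => hN ?_) _
    rw [h.2]
    exact Nat.lt_succ_iff.1 (mem_range.1 hr)

lemma integrable_ite_inv [IsFiniteMeasure μ] (hX : Measurable X) (hN : Measurable N) :
    Integrable (fun ω => if X ω ≤ α (N ω) ∧ N ω ≤ k then (N ω : ℝ)⁻¹ else 0) μ := by
  simp_rw [ite_inv_eq_sum_indicator]
  exact integrable_finsetSum _ fun r _ => (integrable_const _).indicator
    ((hX measurableSet_Iic).inter (hN (measurableSet_singleton r)))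

lemma integral_ite_inv_le [IsProbabilityMeasure μ] (hX : Measurable X) (hN : Measurable N)
    (hXN : IndepFun X N μ) (hXsup : ∀ a, 0 ≤ a → μ.real (X ⁻¹' Set.Iic a) ≤ a) {b : ℝ}
    (hb : 0 ≤ b) (hα : ∀ r, 1 ≤ r → r ≤ k → α r ≤ r * b) :
    ∫ ω, (if X ω ≤ α (N ω) ∧ N ω ≤ k then (N ω : ℝ)⁻¹ else 0) ∂μ ≤ b := by
  have hterm (r : ℕ) (hr : r ∈ range (k + 1)) :
      μ.real (X ⁻¹' Set.Iic (α r)) * (r : ℝ)⁻¹ ≤ b := by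
    rcases Nat.eq_zero_or_pos r with rfl | hr1
    · simpa using hb
    rw [mul_inv_le_iff₀ (Nat.cast_pos.2 hr1)]
    calc μ.real (X ⁻¹' Set.Iic (α r)) ≤ μ.real (X ⁻¹' Set.Iic (r * b)) :=
          measureReal_mono (Set.preimage_mono (Set.Iic_subset_Iic.2
            (hα r hr1 (Nat.lt_succ_iff.1 (mem_range.1 hr)))))
      _ ≤ b * r := (hXsup _ (by positivity)).trans_eq (mul_comm _ _)
  have hmeas (r : ℕ) : MeasurableSet (X ⁻¹' Set.Iic (α r) ∩ N ⁻¹' {r}) :=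
    (hX measurableSet_Iic).inter (hN (measurableSet_singleton r))
  simp_rw [ite_inv_eq_sum_indicator]
  rw [integral_finsetSum _ fun r _ => (integrable_const _).indicator (hmeas r)]
  calc ∑ r ∈ range (k + 1), ∫ ω, (X ⁻¹' Set.Iic (α r) ∩ N ⁻¹' {r}).indicator
          (fun _ => (r : ℝ)⁻¹) ω ∂μ
      = ∑ r ∈ range (k + 1),
          μ.real (N ⁻¹' {r}) * (μ.real (X ⁻¹' Set.Iic (α r)) * (r : ℝ)⁻¹) := by
        refine sum_congr rfl fun r _ => ?_
        rw [integral_indicator_const _ (hmeas r), smul_eq_mul, measureReal_def,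
          hXN.measure_inter_preimage_eq_mul _ _ measurableSet_Iic (measurableSet_singleton r),
          ENNReal.toReal_mul, ← measureReal_def, ← measureReal_def]
        ring
    _ ≤ ∑ r ∈ range (k + 1), μ.real (N ⁻¹' {r}) * b :=
        sum_le_sum fun r hr => mul_le_mul_of_nonneg_left (hterm r hr) measureReal_nonneg
    _ = μ.real (N ⁻¹' ↑(range (k + 1))) * b := by
        rw [← sum_mul,
          sum_measureReal_preimage_singleton _ fun r _ => hN (measurableSet_singleton r)]
    _ ≤ b := mul_le_of_le_one_left hb measureReal_le_one

end ProbabilityTheory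

namespace StepUp

variable {Ω : Type*} {mΩ : MeasurableSpace Ω} {μ : Measure Ω} {n : ℕ} {αc : ℕ → ℝ}
  {q : Fin n → Ω → ℝ} {ω : Ω}

noncomputable def numBelow (n : ℕ) (αc : ℕ → ℝ) (q : Fin n → Ω → ℝ) (i : ℕ) (ω : Ω) : ℕ :=
  #{j | q j ω ≤ αc i}

lemma numRej_eq_sup : numRej n αc q ω = {i ∈ Icc 1 n | i ≤ numBelow n αc q i ω}.sup id := rfl

lemma le_numRej {i : ℕ} (hi : 1 ≤ i) (hin : i ≤ n) (h : i ≤ numBelow n αc q i ω) :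
    i ≤ numRej n αc q ω :=
  le_sup (f := id) (mem_filter.2 ⟨mem_Icc.2 ⟨hi, hin⟩, h⟩)

lemma numRej_le : numRej n αc q ω ≤ n :=
  Finset.sup_le fun _ hi => (mem_Icc.1 (mem_filter.1 hi).1).2

lemma numRej_le_numBelow (h : 1 ≤ numRej n αc q ω) :
    numRej n αc q ω ≤ numBelow n αc q (numRej n αc q ω) ω := by
  rw [numRej_eq_sup] at h ⊢
  have hne : {i ∈ Icc 1 n | i ≤ numBelow n αc q i ω}.Nonempty := by
    by_contra he
    simp [not_nonempty_iff_eq_empty.1 he] at h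
  obtain ⟨i, hi, hsup⟩ := exists_mem_eq_sup _ hne id
  rw [hsup]
  exact (mem_filter.1 hi).2

lemma numBelow_mono (hα : MonotoneOn αc (Set.Icc 1 n)) {i j : ℕ} (hi : 1 ≤ i) (hij : i ≤ j)
    (hj : j ≤ n) : numBelow n αc q i ω ≤ numBelow n αc q j ω :=
  card_le_card <| monotone_filter_right _ fun _ _ h =>
    h.trans (hα ⟨hi, hij.trans hj⟩ ⟨hi.trans hij, hj⟩ hij)

lemma numBelow_numRej (hα : MonotoneOn αc (Set.Icc 1 n)) (h : 1 ≤ numRej n αc q ω) :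
    numBelow n αc q (numRej n αc q ω) ω = numRej n αc q ω := by
  refine le_antisymm (not_lt.1 fun hlt => ?_) (numRej_le_numBelow h)
  have hle : numBelow n αc q (numRej n αc q ω) ω ≤ n := card_le_univ _ |>.trans_eq (by simp)
  exact hlt.not_ge (le_numRej (h.trans hlt.le) hle (numBelow_mono hα h hlt.le hle))

lemma fdp_le_one (hα : MonotoneOn αc (Set.Icc 1 n)) (T : Finset (Fin n)) :
    (numFalseRej n αc q T ω : ℝ) / numRej n αc q ω ≤ 1 := by
  rcases Nat.eq_zero_or_pos (numRej n αc q ω) with h0 | hpos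
  · simp [h0]
  refine div_le_one_of_le₀ ?_ (Nat.cast_nonneg _)
  have hV : numFalseRej n αc q T ω ≤ numBelow n αc q (numRej n αc q ω) ω := by
    rw [numFalseRej, max_eq_left hpos]
    exact card_le_card (filter_subset_filter _ (subset_univ T))
  exact_mod_cast hV.trans (numBelow_numRej hα hpos).le

/-- `q i` is replaced by `αc 1`, which lies below every critical value, so that hypothesis `i`
is rejected whatever the number of rejections. -/
noncomputable def leaveOut (αc : ℕ → ℝ) (q : Fin n → Ω → ℝ) (i : Fin n) : Fin n → Ω → ℝ :=
  Function.update q i fun _ => αc 1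

variable {i : Fin n}

@[simp]
lemma leaveOut_self : leaveOut αc q i i = fun _ => αc 1 :=
  Function.update_self _ _ _

lemma leaveOut_of_ne {j : Fin n} (hj : j ≠ i) : leaveOut αc q i j = q j :=
  Function.update_of_ne hj _ _

lemma filter_leaveOut_le (hα : MonotoneOn αc (Set.Icc 1 n)) {s : ℕ} (hs : 1 ≤ s) (hsn : s ≤ n) :
    univ.filter (fun j => leaveOut αc q i j ω ≤ αc s) =
      insert i (univ.filter fun j => q j ω ≤ αc s) := by
  ext j
  rw [mem_filter, mem_insert, mem_filter]
  by_cases hj : j = i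
  · subst hj
    simpa using hα ⟨le_rfl, hs.trans hsn⟩ ⟨hs, hsn⟩ hs
  · simp [leaveOut_of_ne hj, hj]

lemma numBelow_le_numBelow_leaveOut (hα : MonotoneOn αc (Set.Icc 1 n)) {s : ℕ} (hs : 1 ≤ s)
    (hsn : s ≤ n) : numBelow n αc q s ω ≤ numBelow n αc (leaveOut αc q i) s ω := by
  rw [numBelow, numBelow, filter_leaveOut_le hα hs hsn]
  exact card_le_card (subset_insert _ _)

lemma numBelow_leaveOut_of_le (hα : MonotoneOn αc (Set.Icc 1 n)) {s : ℕ} (hs : 1 ≤ s)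
    (hsn : s ≤ n) (h : q i ω ≤ αc s) :
    numBelow n αc (leaveOut αc q i) s ω = numBelow n αc q s ω := by
  rw [numBelow, numBelow, filter_leaveOut_le hα hs hsn, insert_eq_of_mem (by simpa using h)]

lemma numRej_le_numRej_leaveOut (hα : MonotoneOn αc (Set.Icc 1 n)) :
    numRej n αc q ω ≤ numRej n αc (leaveOut αc q i) ω := by
  rw [numRej_eq_sup, numRej_eq_sup]
  refine sup_mono (monotone_filter_right _ fun s hs h => h.trans ?_)
  exact numBelow_le_numBelow_leaveOut hα (mem_Icc.1 hs).1 (mem_Icc.1 hs).2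

lemma one_le_numRej_leaveOut : 1 ≤ numRej n αc (leaveOut αc q i) ω :=
  le_numRej le_rfl i.pos (card_pos.2 ⟨i, by simp [mem_filter]⟩)

lemma one_le_numRej_of_le (h : q i ω ≤ αc (max (numRej n αc q ω) 1)) :
    1 ≤ numRej n αc q ω := by
  by_contra h0
  rw [Nat.lt_one_iff.1 (not_le.1 h0)] at h
  exact h0 (le_numRej le_rfl i.pos (card_pos.2 ⟨i, by simpa using h⟩))

lemma numRej_leaveOut_eq_of_le (hα : MonotoneOn αc (Set.Icc 1 n))
    (h : q i ω ≤ αc (numRej n αc (leaveOut αc q i) ω)) :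
    numRej n αc (leaveOut αc q i) ω = numRej n αc q ω := by
  have h1 : 1 ≤ numRej n αc (leaveOut αc q i) ω := one_le_numRej_leaveOut
  have hle := numRej_le_numBelow h1
  rw [numBelow_leaveOut_of_le hα h1 numRej_le h] at hle
  exact le_antisymm (le_numRej h1 numRej_le hle) (numRej_le_numRej_leaveOut hα)

lemma numRej_leaveOut_eq_of_le_max (hα : MonotoneOn αc (Set.Icc 1 n))
    (h : q i ω ≤ αc (max (numRej n αc q ω) 1)) :
    numRej n αc (leaveOut αc q i) ω = numRej n αc q ω := by
  have h1 := one_le_numRej_of_le h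
  rw [max_eq_left h1] at h
  refine le_antisymm (not_lt.1 fun hlt => hlt.ne' ?_) (numRej_le_numRej_leaveOut hα)
  exact numRej_leaveOut_eq_of_le hα
    (h.trans (hα ⟨h1, numRej_le⟩ ⟨h1.trans hlt.le, numRej_le⟩ hlt.le))

lemma le_αc_numRej_iff (hα : MonotoneOn αc (Set.Icc 1 n)) :
    q i ω ≤ αc (max (numRej n αc q ω) 1) ↔ q i ω ≤ αc (numRej n αc (leaveOut αc q i) ω) := by
  refine ⟨fun h => ?_, fun h => ?_⟩
  · rwa [numRej_leaveOut_eq_of_le_max hα h, ← max_eq_left (one_le_numRej_of_le h)]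
  · have heq := numRej_leaveOut_eq_of_le hα h
    rwa [← heq, max_eq_left one_le_numRej_leaveOut]

lemma fdp_le (hα : MonotoneOn αc (Set.Icc 1 n)) (T : Finset (Fin n)) (k : ℕ) :
    (numFalseRej n αc q T ω : ℝ) / numRej n αc q ω ≤
      {ω | k < numRej n αc q ω}.indicator 1 ω +
        ∑ i ∈ T, if q i ω ≤ αc (numRej n αc (leaveOut αc q i) ω) ∧
            numRej n αc (leaveOut αc q i) ω ≤ k
          then (numRej n αc (leaveOut αc q i) ω : ℝ)⁻¹ else 0 := by
  by_cases hk : ω ∈ {ω | k < numRej n αc q ω}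
  · rw [Set.indicator_of_mem hk, Pi.one_apply]
    refine le_add_of_le_of_nonneg (fdp_le_one hα T) (sum_nonneg fun i _ => ?_)
    split_ifs <;> positivity
  rw [Set.indicator_of_notMem hk, zero_add, numFalseRej, natCast_card_filter, sum_div]
  refine le_of_eq (sum_congr rfl fun i _ => ?_)
  by_cases h : q i ω ≤ αc (max (numRej n αc q ω) 1)
  · have heq := numRej_leaveOut_eq_of_le_max hα h
    rw [if_pos h, if_pos ⟨(le_αc_numRej_iff hα).1 h, heq ▸ not_lt.1 hk⟩, heq, one_div]
  · rw [if_neg h, if_neg fun h' => h ((le_αc_numRej_iff hα).2 h'.1), zero_div]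

lemma measurable_numRej (hq : ∀ j, Measurable (q j)) : Measurable (numRej n αc q) := by
  have hbelow (i : ℕ) : Measurable fun ω => numBelow n αc q i ω := by
    simp only [numBelow, card_filter]
    exact Finset.measurable_sum _ fun j _ =>
      Measurable.ite (hq j measurableSet_Iic) measurable_const measurable_const
  have hsup : numRej n αc q =
      (Icc 1 n).sup fun i ω => if i ≤ numBelow n αc q i ω then i else 0 := by
    funext ω
    rw [Finset.sup_apply, Finset.sup_ite, numRej_eq_sup,
      sup_of_le_left (Finset.sup_le fun _ _ => Nat.zero_le _)]
    rfl
  rw [hsup]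
  exact Finset.sup_induction measurable_const (fun f hf g hg => hf.sup hg) fun i _ =>
    Measurable.ite (measurableSet_le measurable_const (hbelow i)) measurable_const
      measurable_const

lemma measurable_leaveOut (hq : ∀ j ≠ i, Measurable (q j)) (j : Fin n) :
    Measurable (leaveOut αc q i j) := by
  by_cases hj : j = i
  · rw [hj, leaveOut_self]
    exact measurable_const
  · rw [leaveOut_of_ne hj]
    exact hq j hj

lemma indepFun_numRej_leaveOut [IsProbabilityMeasure μ] (hq : ∀ j, Measurable (q j))
    {T : Finset (Fin n)} (hiid : iIndepFun (fun i : {j // j ∈ T} => q i) μ)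
    (hindep : IndepFun (fun ω (i : {j // j ∈ T}) => q i ω) (fun ω (j : {j // j ∉ T}) => q j ω) μ)
    (hi : i ∈ T) : IndepFun (q i) (numRej n αc (leaveOut αc q i)) μ := by
  rw [IndepFun_iff_Indep]
  refine indep_of_indep_of_le_right (indep_comap_iSup_comap_ne hq hiid hindep hi)
    (Measurable.comap_le (measurable_numRej (measurable_leaveOut fun j hj => ?_)))
  exact (comap_measurable (q j)).mono
    (le_iSup₂ (f := fun j (_ : j ≠ i) => MeasurableSpace.comap (q j) inferInstance) j hj) le_rfl

end StepUp

open StepUp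

theorem fdr_upper_bound_general
    {Ω : Type} [MeasurableSpace Ω] (μ : Measure Ω) [IsProbabilityMeasure μ]
    (n n₀ : ℕ)
    (q : Fin n → Ω → ℝ) (hq : ∀ j, Measurable (q j))
    (T : Finset (Fin n)) (hT : T.card = n₀)
    (αc : ℕ → ℝ)
    (hmono : ∀ i j, 1 ≤ i → i ≤ j → j ≤ n → αc i ≤ αc j)
    (hunif : ∀ i ∈ T, μ.map (q i) = volume.restrict (Set.Ioo 0 1))
    (hiid : iIndepFun
      (fun i : {j : Fin n // j ∈ T} => q i) μ)
    (hindep : IndepFun (fun ω (i : {j : Fin n // j ∈ T}) => q i ω)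
      (fun ω (j : {j : Fin n // j ∉ T}) => q j ω) μ)
    (k : ℕ) (c : ℝ) (hc0 : 0 < c)
    (hαc : ∀ j, 1 ≤ j → j ≤ k → αc j ≤ (j : ℝ) * c / n) :
    ∫ ω, (numFalseRej n αc q T ω : ℝ) / (numRej n αc q ω : ℝ) ∂μ
      ≤ c * n₀ / n + (μ {ω | k < numRej n αc q ω}).toReal := by
  have hα : MonotoneOn αc (Set.Icc 1 n) := fun i hi j hj hij => hmono i j hi.1 hij hj.2
  let A := {ω | k < numRej n αc q ω}
  have hA : MeasurableSet A := measurableSet_lt measurable_const (measurable_numRej hq)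
  let R' (i : Fin n) := numRej n αc (leaveOut αc q i)
  let g (i : Fin n) (ω : Ω) : ℝ := if q i ω ≤ αc (R' i ω) ∧ R' i ω ≤ k then (R' i ω : ℝ)⁻¹ else 0
  have hR' (i : Fin n) : Measurable (R' i) :=
    measurable_numRej (measurable_leaveOut fun j _ => hq j)
  have hg (i : Fin n) (hi : i ∈ T) : ∫ ω, g i ω ∂μ ≤ c / n :=
    integral_ite_inv_le (hq i) (hR' i) (indepFun_numRej_leaveOut hq hiid hindep hi)
      (fun _ => measureReal_preimage_Iic_le (hq i) (hunif i hi)) (by positivity)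
      fun r hr hrk => (hαc r hr hrk).trans_eq (mul_div_assoc _ _ _)
  have hind : Integrable (A.indicator (1 : Ω → ℝ)) μ := (integrable_const 1).indicator hA
  have hsum : Integrable (fun ω => ∑ i ∈ T, g i ω) μ :=
    integrable_finsetSum _ fun i _ => integrable_ite_inv (hq i) (hR' i)
  calc ∫ ω, (numFalseRej n αc q T ω : ℝ) / numRej n αc q ω ∂μ
      ≤ ∫ ω, (A.indicator 1 ω + ∑ i ∈ T, g i ω) ∂μ :=
        integral_mono_of_nonneg (ae_of_all _ fun _ => by positivity) (hind.add hsum)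
          (ae_of_all _ fun _ => fdp_le hα T k)
    _ = μ.real A + ∑ i ∈ T, ∫ ω, g i ω ∂μ := by
        rw [integral_add hind hsum, integral_indicator_one hA,
          integral_finsetSum _ fun i _ => integrable_ite_inv (hq i) (hR' i)]
    _ ≤ μ.real A + ∑ _i ∈ T, c / n := by gcongr with i hi; exact hg i hi
    _ = c * n₀ / n + (μ A).toReal := by
        rw [sum_const, hT, nsmul_eq_mul, measureReal_def]
        ring

/-- Upper FDR bound in the BI model: if `α_{j:n} ≤ jc/n` for all `j ≤ k` with `0 < c < 1`,
then the step-up test has `FDR ≤ c·n₀/n + P(R > k)`. -/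
theorem fdr_upper_bound
    {Ω : Type} [MeasurableSpace Ω] (μ : Measure Ω) [IsProbabilityMeasure μ]
    (n n₀ : ℕ) (hn : 0 < n) (hn₀ : n₀ ≤ n)
    (q : Fin n → Ω → ℝ) (hq : ∀ j, Measurable (q j))
    (T : Finset (Fin n)) (hT : T.card = n₀)
    (αc : ℕ → ℝ) (hpos : 0 < αc 1) (hlt : αc n < 1)
    (hmono : ∀ i j, 1 ≤ i → i ≤ j → j ≤ n → αc i ≤ αc j)
    (hunif : ∀ i ∈ T, μ.map (q i) = volume.restrict (Set.Ioo 0 1))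
    (hiid : iIndepFun
      (fun i : {j : Fin n // j ∈ T} => q i) μ)
    (hindep : IndepFun (fun ω (i : {j : Fin n // j ∈ T}) => q i ω)
      (fun ω (j : {j : Fin n // j ∉ T}) => q j ω) μ)
    (k : ℕ) (c : ℝ) (hc0 : 0 < c) (hc1 : c < 1)
    (hαc : ∀ j, 1 ≤ j → j ≤ k → αc j ≤ (j : ℝ) * c / n) :
    ∫ ω, (numFalseRej n αc q T ω : ℝ) / (numRej n αc q ω : ℝ) ∂μ
      ≤ c * n₀ / n + (μ {ω | k < numRej n αc q ω}).toReal :=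
  fdr_upper_bound_general μ n n₀ q hq T hT αc hmono hunif hiid hindep k c hc0 hαc
end

section
/- For the Benjamini–Hochberg step-up test with critical values α_{i:n} = (i/n)α under the Dirac-uniform configuration with n₀ true p-values i.i.d. uniform(0,1) and n−n₀ false p-values equal to 0, the expected number of falsely rejected hypotheses h(n₀, α) = E_DU(V | n₀) satisfies the recursion h(1, α) = α and h(n₀, α) = (n₀α/n)·(h(n₀−1, α) + n − n₀ + 1). -/
open MeasureTheory ProbabilityTheory Finset
open scoped Classical

/-- `E_DU(V | n₀)` for the Benjamini–Hochberg step-up test (`α_{i:n} = (i/n)·a`) under the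
Dirac-uniform configuration: `n₀` true `p`-values are the i.i.d. uniform(0,1) coordinates,
the remaining `n − n₀` false `p`-values are identically `0`. -/
noncomputable def EDUBH (n n₀ : ℕ) (a : ℝ) : ℝ :=
  ∫ u : Fin n₀ → ℝ,
    (numFalseRej n (fun i => (i : ℝ) / n * a)
      (Sum.elim (fun (i : Fin n₀) (v : Fin n₀ → ℝ) => v i)
        (fun (_ : Fin (n - n₀)) (_ : Fin n₀ → ℝ) => (0 : ℝ)))
      (Finset.univ.filter fun j : Fin n₀ ⊕ Fin (n - n₀) => j.isLeft = true) u : ℝ)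
  ∂(Measure.pi fun _ : Fin n₀ => volume.restrict (Set.Ioo (0 : ℝ) 1))

/-! Fix a true `p`-value `u j` and let `R⁽ʲ⁾` be the number of rejections of the step-up test with
critical values `α_{i+1:n}` applied to the other `n - 1` `p`-values. Then `u j` is rejected exactly
when `u j ≤ α_{R⁽ʲ⁾+1:n}`, and `R⁽ʲ⁾` does not depend on `u j`, so by Fubini
`h(n₀) = n₀ · E α_{R⁽ʲ⁾+1:n} = (n₀ a / n) (E R⁽ʲ⁾ + 1)`. As a function of the other `n₀ - 1`
uniforms, `R⁽ʲ⁾` is `R - 1` for `DU(n, n₀ - 1)`; there all `n - n₀ + 1` zeros are rejected, so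
`R = V + n - n₀ + 1` and `E R⁽ʲ⁾ = h(n₀ - 1) + n - n₀`. -/

noncomputable def stepUp (n : ℕ) (N : ℕ → ℕ) : ℕ :=
  ((Icc 1 n).filter fun i => i ≤ N i).sup id

section StepUp

variable {n i r : ℕ} {N N' : ℕ → ℕ}

theorem numRej_eq_stepUp {Ω ι : Type*} [Fintype ι] (αc : ℕ → ℝ) (q : ι → Ω → ℝ) (ω : Ω) :
    numRej n αc q ω = stepUp n fun i => #{j | q j ω ≤ αc i} :=
  rfl

theorem le_stepUp (h1 : 1 ≤ i) (hn : i ≤ n) (hN : i ≤ N i) : i ≤ stepUp n N :=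
  le_sup (f := id) (mem_filter.2 ⟨mem_Icc.2 ⟨h1, hn⟩, hN⟩)

theorem stepUp_le (h : ∀ i, 1 ≤ i → i ≤ n → i ≤ N i → i ≤ r) : stepUp n N ≤ r :=
  Finset.sup_le fun i hi => by
    obtain ⟨hi, hN⟩ := mem_filter.1 hi
    exact h i (mem_Icc.1 hi).1 (mem_Icc.1 hi).2 hN

theorem stepUp_le_self : stepUp n N ≤ n :=
  stepUp_le fun _ _ hi _ => hi

theorem stepUp_le_apply : stepUp n N ≤ N (stepUp n N) := by
  rcases ((Icc 1 n).filter fun i => i ≤ N i).eq_empty_or_nonempty with h | h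
  · simp [stepUp, h]
  · obtain ⟨i, hi, hR⟩ := exists_mem_eq_sup _ h id
    rw [stepUp, hR]
    exact (mem_filter.1 hi).2

theorem apply_stepUp (hN : Monotone N) (hNn : ∀ i, N i ≤ n) (hpos : 0 < stepUp n N) :
    N (stepUp n N) = stepUp n N := by
  have hR := stepUp_le_apply (n := n) (N := N)
  exact le_antisymm (le_stepUp (by omega) (hNn _) (hN hR)) hR

theorem stepUp_le_stepUp_succ (h : ∀ i, N i ≤ N' i + 1) :
    stepUp n N ≤ stepUp (n - 1) (fun i => N' (i + 1)) + 1 :=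
  stepUp_le fun i _ hi hN => by
    rcases Nat.lt_or_ge i 2 with h2 | h2
    · omega
    · have : i - 1 ≤ stepUp (n - 1) (fun i => N' (i + 1)) :=
        le_stepUp (by omega) (by omega) (by rw [Nat.sub_add_cancel (by omega)]; have := h i; omega)
      omega

theorem stepUp_succ_le_stepUp (hn : 1 ≤ n)
    (h : N' (stepUp (n - 1) (fun i => N' (i + 1)) + 1) + 1 ≤
      N (stepUp (n - 1) (fun i => N' (i + 1)) + 1)) :
    stepUp (n - 1) (fun i => N' (i + 1)) + 1 ≤ stepUp n N :=
  le_stepUp (by omega) (by have := stepUp_le_self (n := n - 1) (N := fun i => N' (i + 1)); omega)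
    (by have := stepUp_le_apply (n := n - 1) (N := fun i => N' (i + 1)); omega)

theorem stepUp_add_one (hn : 1 ≤ n) :
    stepUp n (fun i => N i + 1) = stepUp (n - 1) (fun i => N (i + 1)) + 1 :=
  le_antisymm (stepUp_le_stepUp_succ fun _ => le_rfl) (stepUp_succ_le_stepUp hn le_rfl)

theorem le_crit_max_stepUp_iff {αc : ℕ → ℝ} (hα : Monotone αc) (hn : 1 ≤ n) {x : ℝ}
    (hN : ∀ i, N i = N' i + if x ≤ αc i then 1 else 0) :
    x ≤ αc (max (stepUp n N) 1) ↔ x ≤ αc (stepUp (n - 1) (fun i => N' (i + 1)) + 1) := by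
  constructor
  · refine fun h => h.trans (hα (max_le (stepUp_le_stepUp_succ fun i => ?_) (by omega)))
    rw [hN]
    split_ifs <;> omega
  · intro h
    have := stepUp_succ_le_stepUp hn (N := N) (by rw [hN, if_pos h])
    exact h.trans (hα (le_max_of_le_left this))

theorem measurable_stepUp {δ : Type*} [MeasurableSpace δ] {N : ℕ → δ → ℕ}
    (hN : ∀ i, Measurable (N i)) : Measurable fun x => stepUp n fun i => N i x := by
  have h : (fun x => stepUp n fun i => N i x) =
      (Icc 1 n).sup fun i x => if i ≤ N i x then i else 0 := by
    funext x
    rw [Finset.sup_apply, stepUp]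
    simp only [sup_ite, Finset.sup_le_iff, mem_filter, zero_le, implies_true, sup_of_le_left]
    rfl
  rw [h]
  refine Finset.sup_induction measurable_const (fun f hf g hg => hf.sup hg) fun i _ => ?_
  exact Measurable.ite (measurableSet_le measurable_const (hN i)) measurable_const measurable_const

end StepUp

noncomputable def countLE {k : ℕ} (w : Fin k → ℝ) (t : ℝ) : ℕ :=
  #{j | w j ≤ t}

section CountLE

variable {k : ℕ}

theorem countLE_le (w : Fin k → ℝ) (t : ℝ) : countLE w t ≤ k :=
  (card_filter_le _ _).trans_eq (card_fin k)

theorem countLE_mono (w : Fin k → ℝ) : Monotone (countLE w) :=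
  fun _ _ hst => card_le_card (monotone_filter_right _ fun _ _ hj => hj.trans hst)

theorem countLE_eq_removeNth (u : Fin (k + 1) → ℝ) (j : Fin (k + 1)) (t : ℝ) :
    countLE u t = countLE (j.removeNth u) t + if u j ≤ t then 1 else 0 := by
  rw [countLE, countLE, card_filter, card_filter, Fin.sum_univ_succAbove _ j]
  simp only [Fin.removeNth_apply]
  rw [add_comm]
  congr

theorem measurable_countLE (t : ℝ) : Measurable fun w : Fin k → ℝ => countLE w t := by
  simp only [countLE, card_filter]
  exact Finset.measurable_sum _ fun j _ => Measurable.ite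
    (measurableSet_le (measurable_pi_apply j) measurable_const) measurable_const measurable_const

end CountLE

def duPValues (k m : ℕ) : Fin k ⊕ Fin m → (Fin k → ℝ) → ℝ :=
  Sum.elim (fun i v => v i) (fun _ _ => 0)

/-- `R⁽ʲ⁾` for a true `p`-value `j` of `DU(n, k + 1)` with `m = n - k - 1`, evaluated at the other
`k` true `p`-values `w`. -/
noncomputable def reducedNumRej (n m : ℕ) (αc : ℕ → ℝ) {k : ℕ} (w : Fin k → ℝ) : ℕ :=
  stepUp (n - 1) fun i => countLE w (αc (i + 1)) + m

local notation "𝒰" => (volume.restrict (Set.Ioo (0 : ℝ) 1) : Measure ℝ)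

section DiracUniform

variable {n k m : ℕ} {αc : ℕ → ℝ} {a : ℝ}

theorem EDUBH_eq_integral (hm : n - k = m) :
    EDUBH n k a = ∫ u, (numFalseRej n (fun i => (i : ℝ) / n * a) (duPValues k m)
      {j | j.isLeft} u : ℝ) ∂Measure.pi fun _ : Fin k => 𝒰 := by
  subst hm
  rfl

theorem card_duPValues_le (u : Fin k → ℝ) {t : ℝ} (ht : 0 ≤ t) :
    #{j | duPValues k m j u ≤ t} = countLE u t + m := by
  rw [countLE, card_filter, card_filter, Fintype.sum_sum_type]
  simp only [duPValues, Sum.elim_inl, Sum.elim_inr, ht, if_true, sum_const, card_univ,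
    Fintype.card_fin, smul_eq_mul, mul_one]
  congr 1

theorem numRej_duPValues (hα : ∀ i, 0 ≤ αc i) (u : Fin k → ℝ) :
    numRej n αc (duPValues k m) u = stepUp n fun i => countLE u (αc i) + m := by
  simp only [numRej_eq_stepUp, card_duPValues_le u (hα _)]

theorem numFalseRej_duPValues (u : Fin k → ℝ) :
    numFalseRej n αc (duPValues k m) {j | j.isLeft} u =
      countLE u (αc (max (numRej n αc (duPValues k m) u) 1)) := by
  rw [numFalseRej, countLE, filter_filter, card_filter, card_filter, Fintype.sum_sum_type]
  simp only [duPValues, Sum.isLeft_inl, Sum.isLeft_inr, Sum.elim_inl, true_and,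
    Bool.false_eq_true, false_and, if_false, sum_const_zero, add_zero]
  exact sum_congr rfl fun _ _ => if_congr Iff.rfl rfl rfl

theorem EDUBH_zero : EDUBH n 0 a = 0 := by
  simp [EDUBH_eq_integral rfl, numFalseRej_duPValues, countLE]

theorem le_crit_numRej_duPValues_iff (hn : 1 ≤ n) (hα : Monotone αc) (hα0 : ∀ i, 0 ≤ αc i)
    (u : Fin (k + 1) → ℝ) (j : Fin (k + 1)) :
    u j ≤ αc (max (numRej n αc (duPValues (k + 1) m) u) 1) ↔
      u j ≤ αc (reducedNumRej n m αc (j.removeNth u) + 1) := by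
  rw [numRej_duPValues hα0]
  exact le_crit_max_stepUp_iff (N' := fun i => countLE (j.removeNth u) (αc i) + m) hα hn
    fun i => by rw [countLE_eq_removeNth u j]; ring

theorem numFalseRej_duPValues_add (hn : k + m + 1 ≤ n) (hα : Monotone αc)
    (hα0 : ∀ i, 0 ≤ αc i) (w : Fin k → ℝ) :
    numFalseRej n αc (duPValues k (m + 1)) {j | j.isLeft} w + m = reducedNumRej n m αc w := by
  have hR : stepUp n (fun i => countLE w (αc i) + m + 1) = reducedNumRej n m αc w + 1 :=
    stepUp_add_one (by omega)
  have hcount := apply_stepUp (n := n) (N := fun i => countLE w (αc i) + m + 1)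
    (fun i j hij => by have := countLE_mono w (hα hij); dsimp only; omega)
    (fun i => by have := countLE_le w (αc i); omega) (by omega)
  rw [hR] at hcount
  rw [numFalseRej_duPValues, numRej_duPValues hα0]
  simp only [← add_assoc]
  rw [hR, max_eq_left (by omega)]
  omega

theorem measurable_reducedNumRej (n m : ℕ) (αc : ℕ → ℝ) :
    Measurable fun w : Fin k → ℝ => reducedNumRej n m αc w :=
  measurable_stepUp fun _ => (measurable_countLE _).add_const _

end DiracUniform

section Exchange

variable {k : ℕ}

theorem integral_pi_comp_removeNth {α : Type*} [MeasurableSpace α] (μ : Measure α)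
    [SigmaFinite μ] (j : Fin (k + 1)) {g : α × (Fin k → α) → ℝ}
    (hg : Integrable g (μ.prod (Measure.pi fun _ => μ))) :
    ∫ u, g (u j, j.removeNth u) ∂Measure.pi (fun _ => μ) =
      ∫ w, ∫ x, g (x, w) ∂μ ∂Measure.pi (fun _ => μ) := by
  rw [← integral_prod_symm g hg]
  exact (measurePreserving_piFinSuccAbove (fun _ => μ) j).integral_comp' g

theorem integrable_pi_comp_removeNth {α : Type*} [MeasurableSpace α] (μ : Measure α)
    [SigmaFinite μ] (j : Fin (k + 1)) {g : α × (Fin k → α) → ℝ}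
    (hg : Integrable g (μ.prod (Measure.pi fun _ => μ))) :
    Integrable (fun u => g (u j, j.removeNth u)) (Measure.pi fun _ => μ) :=
  ((measurePreserving_piFinSuccAbove (fun _ => μ) j).integrable_comp_emb
    (MeasurableEquiv.measurableEmbedding _)).2 hg

theorem integral_card_le_removeNth (μ : Measure ℝ) [IsFiniteMeasure μ]
    {c : (Fin k → ℝ) → ℝ} (hc : Measurable c) (hμc : ∀ w, μ.real (Set.Iic (c w)) = c w) :
    ∫ u, (#{j : Fin (k + 1) | u j ≤ c (j.removeNth u)} : ℝ) ∂Measure.pi (fun _ => μ) =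
      (k + 1) * ∫ w, c w ∂Measure.pi (fun _ => μ) := by
  set g : ℝ × (Fin k → ℝ) → ℝ := {p | p.1 ≤ c p.2}.indicator 1 with hg_def
  have hg : Integrable g (μ.prod (Measure.pi fun _ => μ)) :=
    (integrable_const 1).indicator (measurableSet_le measurable_fst (hc.comp measurable_snd))
  have hsection : ∀ w, ∫ x, g (x, w) ∂μ = c w := fun w => by
    rw [← hμc w, ← integral_indicator_one measurableSet_Iic]
    rfl
  calc ∫ u, (#{j : Fin (k + 1) | u j ≤ c (j.removeNth u)} : ℝ) ∂Measure.pi (fun _ => μ)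
      = ∫ u, ∑ j : Fin (k + 1), g (u j, j.removeNth u) ∂Measure.pi (fun _ => μ) := by
        congr 1
        funext u
        rw [card_filter, Nat.cast_sum]
        exact sum_congr rfl fun j _ => by simp [hg_def, Set.indicator_apply]
    _ = ∑ j : Fin (k + 1), ∫ w, c w ∂Measure.pi (fun _ => μ) := by
        rw [integral_finsetSum _ fun j _ => integrable_pi_comp_removeNth μ j hg]
        simp only [integral_pi_comp_removeNth μ _ hg, hsection]
    _ = (k + 1) * ∫ w, c w ∂Measure.pi (fun _ => μ) := by simp

end Exchange

instance isProbabilityMeasure_uniform01 : IsProbabilityMeasure 𝒰 :=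
  ⟨by simp⟩

theorem uniform01_real_Iic {c : ℝ} (h0 : 0 ≤ c) (h1 : c < 1) : (𝒰).real (Set.Iic c) = c := by
  have : Set.Iic c ∩ Set.Ioo 0 1 = Set.Ioc 0 c := by
    ext x
    simp only [Set.mem_inter_iff, Set.mem_Iic, Set.mem_Ioo, Set.mem_Ioc]
    exact ⟨fun ⟨h, h', _⟩ => ⟨h', h⟩, fun ⟨h, h'⟩ => ⟨h', h, h'.trans_lt h1⟩⟩
  rw [measureReal_restrict_apply measurableSet_Iic, this, Real.volume_real_Ioc]
  simp [h0]

section BenjaminiHochberg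

variable {n k m : ℕ} {a : ℝ}

theorem monotone_natCast_div_mul (ha : 0 ≤ a) : Monotone fun i : ℕ => (i : ℝ) / n * a :=
  fun _ _ hij => by dsimp only; gcongr

theorem integrable_reducedNumRej (αc : ℕ → ℝ) :
    Integrable (fun w : Fin k → ℝ => (reducedNumRej n m αc w : ℝ)) (Measure.pi fun _ => 𝒰) :=
  .of_bound (measurable_of_countable (Nat.cast : ℕ → ℝ) |>.comp
      (measurable_reducedNumRej n m αc)).aestronglyMeasurable (n - 1 : ℕ)
    (.of_forall fun w => by
      rw [Real.norm_natCast]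
      exact_mod_cast (stepUp_le_self : reducedNumRej n m αc w ≤ n - 1))

theorem EDUBH_succ_eq (hn : k + 1 + m = n) (ha0 : 0 ≤ a) (ha1 : a < 1) :
    EDUBH n (k + 1) a = (k + 1) * a / n *
      (∫ w, (reducedNumRej n m (fun i => (i : ℝ) / n * a) w : ℝ)
        ∂Measure.pi (fun _ : Fin k => 𝒰) + 1) := by
  rw [EDUBH_eq_integral (m := m) (by omega)]
  set αc : ℕ → ℝ := fun i => (i : ℝ) / n * a with hαc
  set c : (Fin k → ℝ) → ℝ := fun w => αc (reducedNumRej n m αc w + 1) with hc_def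
  have hc : Measurable c :=
    (measurable_of_countable fun r => αc (r + 1)).comp (measurable_reducedNumRej n m αc)
  have hμc (w : Fin k → ℝ) : (𝒰).real (Set.Iic (c w)) = c w := by
    have hR : reducedNumRej n m αc w + 1 ≤ n := by
      have : reducedNumRej n m αc w ≤ n - 1 := stepUp_le_self
      omega
    refine uniform01_real_Iic (by positivity) ?_
    calc c w ≤ (n : ℝ) / n * a := monotone_natCast_div_mul ha0 hR
      _ ≤ a := mul_le_of_le_one_left ha0 (div_self_le_one _)
      _ < 1 := ha1
  have hV (u : Fin (k + 1) → ℝ) :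
      numFalseRej n αc (duPValues (k + 1) m) {j | j.isLeft} u =
        #{j : Fin (k + 1) | u j ≤ c (j.removeNth u)} := by
    rw [numFalseRej_duPValues, countLE]
    exact congrArg card (filter_congr fun j _ => le_crit_numRej_duPValues_iff (by omega)
      (monotone_natCast_div_mul ha0) (fun _ => by positivity) u j)
  have hc_eq (w : Fin k → ℝ) : c w = ((reducedNumRej n m αc w : ℝ) + 1) * (a / n) := by
    rw [hc_def, hαc]
    push_cast
    ring
  simp only [hV]
  rw [integral_card_le_removeNth 𝒰 hc hμc]
  simp only [hc_eq, integral_mul_const,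
    integral_add (integrable_reducedNumRej _) (integrable_const _), integral_const,
    probReal_univ, smul_eq_mul, mul_one]
  ring

theorem EDUBH_add_eq (hn : k + 1 + m = n) (ha0 : 0 ≤ a) :
    EDUBH n k a + m =
      ∫ w, (reducedNumRej n m (fun i => (i : ℝ) / n * a) w : ℝ)
        ∂Measure.pi (fun _ : Fin k => 𝒰) := by
  have hV (w : Fin k → ℝ) :
      (numFalseRej n (fun i => (i : ℝ) / n * a) (duPValues k (m + 1)) {j | j.isLeft} w : ℝ) =
        reducedNumRej n m (fun i => (i : ℝ) / n * a) w - m := by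
    rw [← numFalseRej_duPValues_add (by omega) (monotone_natCast_div_mul ha0)
      (fun _ => by positivity) w]
    push_cast
    ring
  rw [EDUBH_eq_integral (m := m + 1) (by omega)]
  simp only [hV, integral_sub (integrable_reducedNumRej _) (integrable_const _)]
  simp

end BenjaminiHochberg

theorem EDUBH_recursion {n n₀ : ℕ} {a : ℝ} (ha0 : 0 ≤ a) (ha1 : a < 1) (h1 : 1 ≤ n₀)
    (hn₀ : n₀ ≤ n) :
    EDUBH n n₀ a = n₀ * a / n * (EDUBH n (n₀ - 1) a + n - n₀ + 1) := by
  obtain ⟨k, rfl⟩ : ∃ k, n₀ = k + 1 := ⟨n₀ - 1, by omega⟩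
  obtain ⟨m, rfl⟩ : ∃ m, n = k + 1 + m := ⟨n - (k + 1), by omega⟩
  rw [EDUBH_succ_eq rfl ha0 ha1, Nat.add_sub_cancel, ← EDUBH_add_eq rfl ha0]
  push_cast
  ring

/-- Recursion for the expected number of false rejections of the BH step-up test under the
Dirac-uniform configuration: `h(1,a) = a` and `h(n₀,a) = (n₀a/n)(h(n₀−1,a) + n − n₀ + 1)`. -/
theorem bh_du_recursion (n : ℕ) (hn : 0 < n) (a : ℝ) (ha0 : 0 < a) (ha1 : a < 1) :
    EDUBH n 1 a = a ∧
    ∀ n₀, 2 ≤ n₀ → n₀ ≤ n →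
      EDUBH n n₀ a = (n₀ : ℝ) * a / n * (EDUBH n (n₀ - 1) a + (n : ℝ) - n₀ + 1) := by
  refine ⟨?_, fun n₀ h2 hn₀ => EDUBH_recursion ha0.le ha1 (by omega) hn₀⟩
  rw [EDUBH_recursion ha0.le ha1 le_rfl hn, Nat.sub_self, EDUBH_zero]
  field_simp
  ring
end

section
/- With h(n₀, α) defined by h(1, α) = α and the recursion h(n₀, α) = (n₀α/n)(h(n₀−1, α) + n − n₀ + 1) for 2 ≤ n₀ ≤ n, one has the closed form h(n₀, α) = (n₀!/n^{n₀−1})·α^{n₀} + Σ_{j=1}^{n₀−1} (n₀!/j!)·(α/n)^{n₀−j}·(n−j). -/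
open Finset

/-!
Put `x = α / n` and `c j = n - j`. The recursion becomes `h (m + 1) = (m + 1) x (h m + c m)` with
`h 1 = x c 0`, whose solution is `h m = ∑_{j < m} (m! / j!) x^{m-j} c j`: each step multiplies
every existing term by `(m + 1) x` and appends the new term `j = m`. The `j = 0` term of this
sum is the isolated term `(m! / n^{m-1}) α^m` of the closed form.
-/

section Recursion

variable {K : Type*} [Field K] [CharZero K]

theorem sum_factorial_div_mul_pow_succ (x : K) (c : ℕ → K) (m : ℕ) :
    ∑ j ∈ range (m + 1), ((m + 1).factorial / j.factorial : K) * x ^ (m + 1 - j) * c j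
      = (m + 1) * x * (∑ j ∈ range m, (m.factorial / j.factorial : K) * x ^ (m - j) * c j
          + c m) := by
  rw [sum_range_succ, mul_add, mul_sum]
  congr 1
  · refine sum_congr rfl fun j hj => ?_
    rw [Nat.succ_sub (mem_range.mp hj).le, Nat.factorial_succ, pow_succ]
    push_cast
    ring
  · have : (m.factorial : K) ≠ 0 := Nat.cast_ne_zero.mpr m.factorial_ne_zero
    rw [Nat.add_sub_cancel_left, Nat.factorial_succ]
    push_cast
    field_simp

theorem eq_sum_factorial_div_mul_pow_of_succ_eq (x : K) (c g : ℕ → K) (N : ℕ)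
    (h1 : g 1 = x * c 0)
    (hsucc : ∀ m, 1 ≤ m → m + 1 ≤ N → g (m + 1) = (m + 1) * x * (g m + c m)) :
    ∀ m, 1 ≤ m → m ≤ N →
      g m = ∑ j ∈ range m, (m.factorial / j.factorial : K) * x ^ (m - j) * c j := by
  intro m hm hmN
  induction m, hm using Nat.le_induction with
  | base => simp [h1]
  | succ m hm ih =>
    rw [hsucc m hm hmN, ih (by omega), sum_factorial_div_mul_pow_succ]

end Recursion

theorem sum_range_factorial_div_eq_add_sum_Icc {K : Type*} [Field K] (n : K) (hn : n ≠ 0) (a : K) (m : ℕ)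
    (hm : 1 ≤ m) :
    ∑ j ∈ range m, (m.factorial / j.factorial : K) * (a / n) ^ (m - j) * (n - j)
      = m.factorial / n ^ (m - 1) * a ^ m
        + ∑ j ∈ Icc 1 (m - 1), (m.factorial / j.factorial : K) * (a / n) ^ (m - j) * (n - j) := by
  obtain ⟨k, rfl⟩ : ∃ k, m = k + 1 := ⟨m - 1, by omega⟩
  have hIcc : Icc 1 k = Ico 1 (k + 1) := rfl
  rw [sum_range_succ', Nat.add_sub_cancel, hIcc, sum_Ico_eq_sum_range, add_comm]
  congr 1
  · simp only [Nat.cast_zero, Nat.factorial_zero, Nat.cast_one, div_one,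
      sub_zero, Nat.sub_zero, div_pow, pow_succ]
    field_simp
  · refine sum_congr rfl fun j _ => ?_
    rw [add_comm 1 j]

theorem recursion_closed_form_general (n : ℕ) (a : ℝ) (h : ℕ → ℝ)
    (h1 : h 1 = a)
    (hrec : ∀ n₀, 2 ≤ n₀ → n₀ ≤ n →
      h n₀ = (n₀ : ℝ) * a / n * (h (n₀ - 1) + (n : ℝ) - n₀ + 1)) :
    ∀ n₀, 1 ≤ n₀ → n₀ ≤ n →
      h n₀ = (n₀.factorial : ℝ) / (n : ℝ) ^ (n₀ - 1) * a ^ n₀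
        + ∑ j ∈ Finset.Icc 1 (n₀ - 1),
            (n₀.factorial : ℝ) / (j.factorial : ℝ) * (a / n) ^ (n₀ - j) * ((n : ℝ) - j) := by
  intro n₀ h1n₀ hn₀
  have hn : (n : ℝ) ≠ 0 := Nat.cast_ne_zero.mpr (by omega)
  rw [← sum_range_factorial_div_eq_add_sum_Icc (n : ℝ) hn a n₀ h1n₀]
  refine eq_sum_factorial_div_mul_pow_of_succ_eq (a / n) (fun j => n - j) h n ?_ ?_ n₀ h1n₀ hn₀
  · simp [h1, hn]
  · intro m hm hmn
    rw [hrec (m + 1) (by omega) hmn, Nat.add_sub_cancel]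
    push_cast
    ring

/-- Closed form for the recursion `h(1,α) = α`,
`h(n₀,α) = (n₀α/n)(h(n₀−1,α) + n − n₀ + 1)`:
`h(n₀,α) = (n₀!/n^{n₀−1})α^{n₀} + Σ_{j=1}^{n₀−1} (n₀!/j!)(α/n)^{n₀−j}(n−j)`. -/
theorem recursion_closed_form (n : ℕ) (hn : 1 ≤ n) (a : ℝ) (h : ℕ → ℝ)
    (h1 : h 1 = a)
    (hrec : ∀ n₀, 2 ≤ n₀ → n₀ ≤ n →
      h n₀ = (n₀ : ℝ) * a / n * (h (n₀ - 1) + (n : ℝ) - n₀ + 1)) :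
    ∀ n₀, 1 ≤ n₀ → n₀ ≤ n →
      h n₀ = (n₀.factorial : ℝ) / (n : ℝ) ^ (n₀ - 1) * a ^ n₀
        + ∑ j ∈ Finset.Icc 1 (n₀ - 1),
            (n₀.factorial : ℝ) / (j.factorial : ℝ) * (a / n) ^ (n₀ - j) * ((n : ℝ) - j) :=
  recursion_closed_form_general n a h h1 hrec
end

section
/- Let Z_n be random variables with values in [0,1] and E(Z_n) = λ for all n, where 0 < λ < 1, and suppose for every δ > 0 that limsup_n E(Z_n/(1−Z_n+δ)) ≤ λ/(1−λ). Then Z_n → λ in probability. -/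
open MeasureTheory ProbabilityTheory Filter Topology

/-!
For `0 < δ ≤ 1` the function `f_δ x = x / (1 - x + δ)` is uniformly convex on `[0, 1]`: it lies
above each of its tangent lines by at least `(x - λ) ^ 2 / 4`. Integrating at the mean gives the
quantitative Jensen inequality `f_δ (E Z) + Var Z / 4 ≤ E (f_δ Z)`. Since `f_δ λ → λ / (1 - λ)`
as `δ → 0`, the hypothesis on the limsup forces `Var Z_n → 0`, and Chebyshev's inequality gives
convergence in probability.
-/

lemma div_one_sub_add_mem_Icc {x δ : ℝ} (hx : x ∈ Set.Icc (0 : ℝ) 1) (hδ : 0 < δ) :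
    x / (1 - x + δ) ∈ Set.Icc 0 δ⁻¹ := by
  obtain ⟨hx0, hx1⟩ := hx
  refine ⟨div_nonneg hx0 (by linarith), ?_⟩
  rw [← one_div]
  exact div_le_div₀ zero_le_one hx1 hδ (by linarith)

lemma tangent_add_sq_div_four_le_div_one_sub_add {lam δ x : ℝ} (hlam : lam ∈ Set.Icc (0 : ℝ) 1)
    (hx : x ∈ Set.Icc (0 : ℝ) 1) (hδ0 : 0 < δ) (hδ1 : δ ≤ 1) :
    lam / (1 - lam + δ) + (1 + δ) / (1 - lam + δ) ^ 2 * (x - lam) + (x - lam) ^ 2 / 4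
      ≤ x / (1 - x + δ) := by
  obtain ⟨hlam0, hlam1⟩ := hlam
  obtain ⟨hx0, hx1⟩ := hx
  have ha : 0 < 1 - lam + δ := by linarith
  have hb : 0 < 1 - x + δ := by linarith
  have hgap : x / (1 - x + δ) - (lam / (1 - lam + δ) + (1 + δ) / (1 - lam + δ) ^ 2 * (x - lam))
      = (1 + δ) * (x - lam) ^ 2 / ((1 - lam + δ) ^ 2 * (1 - x + δ)) := by
    field_simp
    ring
  have hden : (1 - lam + δ) ^ 2 * (1 - x + δ) ≤ 4 * (1 + δ) := by
    have h2 : (1 - lam + δ) ^ 2 ≤ (1 + δ) ^ 2 := pow_le_pow_left₀ ha.le (by linarith) 2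
    calc (1 - lam + δ) ^ 2 * (1 - x + δ) ≤ (1 + δ) ^ 2 * (1 + δ) := by gcongr; linarith
      _ ≤ 4 * (1 + δ) := by gcongr; nlinarith
  have hquad : (x - lam) ^ 2 / 4 ≤ (1 + δ) * (x - lam) ^ 2 / ((1 - lam + δ) ^ 2 * (1 - x + δ)) := by
    rw [div_le_div_iff₀ (by norm_num) (by positivity)]
    nlinarith [mul_le_mul_of_nonneg_left hden (sq_nonneg (x - lam))]
  linarith

lemma integrable_div_one_sub_add {Ω : Type*} [MeasurableSpace Ω] {ν : Measure Ω}
    [IsFiniteMeasure ν] {X : Ω → ℝ} (hX : AEMeasurable X ν) (hrange : ∀ ω, X ω ∈ Set.Icc (0 : ℝ) 1)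
    {δ : ℝ} (hδ : 0 < δ) : Integrable (fun ω => X ω / (1 - X ω + δ)) ν :=
  memLp_one_iff_integrable.1 <| memLp_of_bounded
    (ae_of_all _ fun ω => div_one_sub_add_mem_Icc (hrange ω) hδ)
    (hX.div ((aemeasurable_const.sub hX).add_const δ)).aestronglyMeasurable 1

lemma integral_div_one_sub_add_add_variance_div_four_le {Ω : Type*} [MeasurableSpace Ω]
    {ν : Measure Ω} [IsProbabilityMeasure ν] {X : Ω → ℝ} (hX : AEMeasurable X ν)
    (hrange : ∀ ω, X ω ∈ Set.Icc (0 : ℝ) 1) {δ : ℝ} (hδ0 : 0 < δ) (hδ1 : δ ≤ 1) :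
    ν[X] / (1 - ν[X] + δ) + Var[X; ν] / 4 ≤ ∫ ω, X ω / (1 - X ω + δ) ∂ν := by
  set m := ν[X]
  have hXL : ∀ p, MemLp X p ν := memLp_of_bounded (ae_of_all _ hrange) hX.aestronglyMeasurable
  have hXi : Integrable X ν := memLp_one_iff_integrable.1 (hXL 1)
  have hm : m ∈ Set.Icc (0 : ℝ) 1 :=
    (convex_Icc 0 1).integral_mem isClosed_Icc (ae_of_all _ hrange) hXi
  have hlin : Integrable (fun ω => (1 + δ) / (1 - m + δ) ^ 2 * (X ω - m)) ν :=
    (hXi.sub (integrable_const m)).const_mul _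
  have htangent : Integrable (fun ω => m / (1 - m + δ) + (1 + δ) / (1 - m + δ) ^ 2 * (X ω - m)) ν :=
    (integrable_const _).add hlin
  have hsq : Integrable (fun ω => (X ω - m) ^ 2 / 4) ν :=
    ((hXL 2).sub (memLp_const m)).integrable_sq.div_const 4
  calc m / (1 - m + δ) + Var[X; ν] / 4
      = ∫ ω, (m / (1 - m + δ) + (1 + δ) / (1 - m + δ) ^ 2 * (X ω - m) + (X ω - m) ^ 2 / 4) ∂ν := by
        rw [integral_add htangent hsq, integral_add (integrable_const _) hlin,
          integral_const_mul, integral_sub hXi (integrable_const m),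
          variance_eq_integral hX]
        simp [m, integral_div]
    _ ≤ ∫ ω, X ω / (1 - X ω + δ) ∂ν :=
        integral_mono (htangent.add hsq) (integrable_div_one_sub_add hX hrange hδ0) fun ω =>
          tangent_add_sq_div_four_le_div_one_sub_add hm (hrange ω) hδ0 hδ1

lemma tendsto_variance_zero_of_limsup_integral_div_one_sub_add_le {ι : Type*} {l : Filter ι}
    {Ω : ι → Type*} [∀ i, MeasurableSpace (Ω i)] {μ : ∀ i, Measure (Ω i)}
    [∀ i, IsProbabilityMeasure (μ i)] {Z : ∀ i, Ω i → ℝ} (hZ : ∀ i, AEMeasurable (Z i) (μ i))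
    (hrange : ∀ i ω, Z i ω ∈ Set.Icc (0 : ℝ) 1) {lam : ℝ} (hlam : lam < 1)
    (hmean : ∀ i, (μ i)[Z i] = lam)
    (hls : ∀ δ : ℝ, 0 < δ →
      l.limsup (fun i => ∫ ω, Z i ω / (1 - Z i ω + δ) ∂(μ i)) ≤ lam / (1 - lam)) :
    Tendsto (fun i => Var[Z i; μ i]) l (𝓝 0) := by
  refine tendsto_order.2 ⟨fun a ha => .of_forall fun i => ha.trans_le (variance_nonneg _ _),
    fun η hη => ?_⟩
  have hcont : Tendsto (fun δ => lam / (1 - lam + δ)) (𝓝[>] 0) (𝓝 (lam / (1 - lam))) := by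
    have : Tendsto (fun δ : ℝ => lam / (1 - lam + δ)) (𝓝 0) (𝓝 (lam / (1 - lam + 0))) :=
      tendsto_const_nhds.div (tendsto_const_nhds.add tendsto_id)
        (by simpa using (sub_pos.2 hlam).ne')
    simpa using this.mono_left nhdsWithin_le_nhds
  obtain ⟨δ, hgap, hδ0, hδ1⟩ : ∃ δ : ℝ, lam / (1 - lam) - η / 8 < lam / (1 - lam + δ) ∧
      0 < δ ∧ δ ≤ 1 :=
    ((hcont.eventually (lt_mem_nhds (sub_lt_self _ (by positivity : 0 < η / 8)))).and
      (Ioc_mem_nhdsGT one_pos)).exists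
  have hbdd : IsBoundedUnder (· ≤ ·) l fun i => ∫ ω, Z i ω / (1 - Z i ω + δ) ∂(μ i) :=
    isBoundedUnder_of ⟨δ⁻¹, fun i => ((convex_Icc 0 δ⁻¹).integral_mem isClosed_Icc
      (ae_of_all _ fun ω => div_one_sub_add_mem_Icc (hrange i ω) hδ0)
      (integrable_div_one_sub_add (hZ i) (hrange i) hδ0)).2⟩
  filter_upwards [eventually_lt_of_limsup_lt
      ((hls δ hδ0).trans_lt (lt_add_of_pos_right _ (by positivity : 0 < η / 8))) hbdd] with i hi
  have := integral_div_one_sub_add_add_variance_div_four_le (hZ i) (hrange i) hδ0 hδ1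
  rw [hmean i] at this
  linarith

lemma tendsto_measure_abs_sub_ge_of_tendsto_variance {ι : Type*} {l : Filter ι}
    {Ω : ι → Type*} [∀ i, MeasurableSpace (Ω i)] {μ : ∀ i, Measure (Ω i)}
    [∀ i, IsFiniteMeasure (μ i)] {Z : ∀ i, Ω i → ℝ} (hZ : ∀ i, MemLp (Z i) 2 (μ i)) {c : ℝ}
    (hmean : ∀ i, (μ i)[Z i] = c) (hvar : Tendsto (fun i => Var[Z i; μ i]) l (𝓝 0))
    {ε : ℝ} (hε : 0 < ε) :
    Tendsto (fun i => μ i {ω | ε ≤ |Z i ω - c|}) l (𝓝 0) := by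
  have hbound : Tendsto (fun i => ENNReal.ofReal (Var[Z i; μ i] / ε ^ 2)) l (𝓝 0) := by
    simpa using ENNReal.tendsto_ofReal (hvar.div_const (ε ^ 2))
  refine tendsto_of_tendsto_of_tendsto_of_le_of_le tendsto_const_nhds hbound
    (fun _ => zero_le) fun i => ?_
  simpa only [hmean i] using meas_ge_le_variance_div_sq (hZ i) hε

theorem convergence_in_probability_of_jensen_general
    (Ω : ℕ → Type) [∀ n, MeasurableSpace (Ω n)] (μ : ∀ n, Measure (Ω n))
    [∀ n, IsProbabilityMeasure (μ n)]
    (Z : ∀ n, Ω n → ℝ) (hm : ∀ n, Measurable (Z n))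
    (lam : ℝ) (h1 : lam < 1)
    (hrange : ∀ n ω, Z n ω ∈ Set.Icc (0 : ℝ) 1)
    (hmean : ∀ n, ∫ ω, Z n ω ∂(μ n) = lam)
    (hls : ∀ δ : ℝ, 0 < δ →
      atTop.limsup (fun n => ∫ ω, Z n ω / (1 - Z n ω + δ) ∂(μ n)) ≤ lam / (1 - lam)) :
    ∀ ε : ℝ, 0 < ε →
      Tendsto (fun n => μ n {ω | ε ≤ |Z n ω - lam|}) atTop (nhds 0) := by
  intro ε hε
  exact tendsto_measure_abs_sub_ge_of_tendsto_variance
    (fun n => memLp_of_bounded (ae_of_all _ (hrange n)) (hm n).aestronglyMeasurable 2) hmean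
    (tendsto_variance_zero_of_limsup_integral_div_one_sub_add_le (fun n => (hm n).aemeasurable)
      hrange h1 hmean hls) hε

/-- If `Z_n ∈ [0,1]`, `E(Z_n) = λ ∈ (0,1)` and `limsup E(Z_n/(1−Z_n+δ)) ≤ λ/(1−λ)` for all
`δ > 0`, then `Z_n → λ` in probability. -/
theorem convergence_in_probability_of_jensen
    (Ω : ℕ → Type) [∀ n, MeasurableSpace (Ω n)] (μ : ∀ n, Measure (Ω n))
    [∀ n, IsProbabilityMeasure (μ n)]
    (Z : ∀ n, Ω n → ℝ) (hm : ∀ n, Measurable (Z n))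
    (lam : ℝ) (h0 : 0 < lam) (h1 : lam < 1)
    (hrange : ∀ n ω, Z n ω ∈ Set.Icc (0 : ℝ) 1)
    (hmean : ∀ n, ∫ ω, Z n ω ∂(μ n) = lam)
    (hls : ∀ δ : ℝ, 0 < δ →
      atTop.limsup (fun n => ∫ ω, Z n ω / (1 - Z n ω + δ) ∂(μ n)) ≤ lam / (1 - lam)) :
    ∀ ε : ℝ, 0 < ε →
      Tendsto (fun n => μ n {ω | ε ≤ |Z n ω - lam|}) atTop (nhds 0) :=
  convergence_in_probability_of_jensen_general Ω μ Z hm lam h1 hrange hmean hls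
end
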